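/- arXiv:math/0512153 — 6 statements merged into one kernel-verified Lean document; each statement's English description precedes it below -/
import Mathlib

section
/- The morphism φ: B → C determined by u^2 ↦ u^2, u^3 ↦ u^3 + εP is flat if and only if the constant term α_0 of the glueing polynomial P is nonzero. Equivalently, the Artin ring k[u,ε]/(ε^2, u^2, u^3 + εP) has k-dimension 2 if and only if α_0 ≠ 0 (and dimension 3 or 4 otherwise). -/
set_option synthInstance.maxHeartbeats 400000
set_option maxHeartbeats 1000000

open MvPolynomial TrivSqZeroExt

namespace Stmt5Aux

variable {k : Type} [Field k]

noncomputable def Istmt (α₀ α₁ α₂ α₃ : k) : Ideal (MvPolynomial (Fin 2) k) :=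
  Ideal.span {(X 1 : MvPolynomial (Fin 2) k) ^ 2, X 0 ^ 2,
    X 0 ^ 3 + X 1 * (C α₃ * X 0 ^ 3 + C α₂ * X 0 ^ 2 + C α₁ * X 0 + C α₀)}

variable (α₀ α₁ α₂ α₃ : k)

lemma mem_Istmt_e2 : (X 1 : MvPolynomial (Fin 2) k) ^ 2 ∈ Istmt α₀ α₁ α₂ α₃ :=
  Ideal.subset_span (by simp)

lemma mem_Istmt_u2 : (X 0 : MvPolynomial (Fin 2) k) ^ 2 ∈ Istmt α₀ α₁ α₂ α₃ :=
  Ideal.subset_span (by simp)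

lemma mem_Istmt_g3 : (X 0 : MvPolynomial (Fin 2) k) ^ 3
    + X 1 * (C α₃ * X 0 ^ 3 + C α₂ * X 0 ^ 2 + C α₁ * X 0 + C α₀) ∈ Istmt α₀ α₁ α₂ α₃ :=
  Ideal.subset_span (by simp)

/-- key combination : α₀ · εu ∈ I -/
lemma smul_eu_mem : C α₀ * (X 1 * X 0) ∈ Istmt (k := k) α₀ α₁ α₂ α₃ := by
  have h : C α₀ * (X 1 * X 0) =
      X 0 * ((X 0 : MvPolynomial (Fin 2) k) ^ 3
          + X 1 * (C α₃ * X 0 ^ 3 + C α₂ * X 0 ^ 2 + C α₁ * X 0 + C α₀))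
        - (X 0 ^ 2 + X 1 * (C α₃ * X 0 ^ 2 + C α₂ * X 0 + C α₁)) * (X 0 ^ 2) := by ring
  rw [h]
  exact sub_mem (Ideal.mul_mem_left _ _ (mem_Istmt_g3 _ _ _ _))
    (Ideal.mul_mem_left _ _ (mem_Istmt_u2 _ _ _ _))

/-- key combination : α₀ · ε ∈ I, given εu ∈ I -/
lemma smul_e_mem (h : (X 1 : MvPolynomial (Fin 2) k) * X 0 ∈ Istmt α₀ α₁ α₂ α₃) :
    C α₀ * X 1 ∈ Istmt (k := k) α₀ α₁ α₂ α₃ := by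
  have h2 : C α₀ * (X 1 : MvPolynomial (Fin 2) k) =
      ((X 0 : MvPolynomial (Fin 2) k) ^ 3
          + X 1 * (C α₃ * X 0 ^ 3 + C α₂ * X 0 ^ 2 + C α₁ * X 0 + C α₀))
        - (X 0 + X 1 * (C α₃ * X 0 + C α₂)) * (X 0 ^ 2) - C α₁ * (X 1 * X 0) := by ring
  rw [h2]
  exact sub_mem (sub_mem (mem_Istmt_g3 _ _ _ _)
    (Ideal.mul_mem_left _ _ (mem_Istmt_u2 _ _ _ _))) (Ideal.mul_mem_left _ _ h)

lemma cancel_C {x : MvPolynomial (Fin 2) k} {c : k} (hc : c ≠ 0)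
    (h : C c * x ∈ Istmt α₀ α₁ α₂ α₃) : x ∈ Istmt α₀ α₁ α₂ α₃ := by
  have h2 := Ideal.mul_mem_left _ (C c⁻¹) h
  rwa [← mul_assoc, ← C_mul, inv_mul_cancel₀ hc, C_1, one_mul] at h2

noncomputable abbrev mkQ : MvPolynomial (Fin 2) k →ₐ[k] MvPolynomial (Fin 2) k ⧸ Istmt α₀ α₁ α₂ α₃ :=
  Ideal.Quotient.mkₐ k (Istmt α₀ α₁ α₂ α₃)

/-- the images of 1, u, ε, uε always span the quotient. -/
lemma span4 (x : MvPolynomial (Fin 2) k ⧸ Istmt α₀ α₁ α₂ α₃) :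
    x ∈ Submodule.span k ({mkQ α₀ α₁ α₂ α₃ 1, mkQ α₀ α₁ α₂ α₃ (X 0), mkQ α₀ α₁ α₂ α₃ (X 1),
      mkQ α₀ α₁ α₂ α₃ (X 0 * X 1)} :
      Set (MvPolynomial (Fin 2) k ⧸ Istmt α₀ α₁ α₂ α₃)) := by
  set m := mkQ α₀ α₁ α₂ α₃ with hm
  set S := Submodule.span k ({m 1, m (X 0), m (X 1), m (X 0 * X 1)} :
      Set (MvPolynomial (Fin 2) k ⧸ Istmt α₀ α₁ α₂ α₃)) with hS
  have h1 : m 1 ∈ S := Submodule.subset_span (Set.mem_insert _ _)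
  have hu : m (X 0) ∈ S := Submodule.subset_span (by
    exact Set.mem_insert_iff.mpr (Or.inr (Set.mem_insert _ _)))
  have he : m (X 1) ∈ S := Submodule.subset_span (by
    exact Set.mem_insert_iff.mpr (Or.inr (Set.mem_insert_iff.mpr (Or.inr (Set.mem_insert _ _)))))
  have hue : m (X 0 * X 1) ∈ S := Submodule.subset_span (by
    exact Set.mem_insert_iff.mpr (Or.inr (Set.mem_insert_iff.mpr (Or.inr
      (Set.mem_insert_iff.mpr (Or.inr rfl))))))
  have hz : ∀ q ∈ Istmt α₀ α₁ α₂ α₃, m q ∈ S := by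
    intro q hq
    have : m q = 0 := by
      rw [hm, mkQ, Ideal.Quotient.mkₐ_eq_mk, Ideal.Quotient.eq_zero_iff_mem]; exact hq
    rw [this]; exact S.zero_mem
  obtain ⟨p, rfl⟩ := Ideal.Quotient.mkₐ_surjective k _ x
  induction p using MvPolynomial.induction_on with
  | C a =>
      have hca : (C a : MvPolynomial (Fin 2) k) = a • 1 := by
        rw [smul_eq_C_mul, mul_one]
      rw [show Ideal.Quotient.mkₐ k (Istmt α₀ α₁ α₂ α₃) = m from rfl, hca, map_smul]
      exact S.smul_mem a h1
  | add p q hp hq => rw [map_add]; exact S.add_mem hp hq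
  | mul_X p i hp =>
      rw [show Ideal.Quotient.mkₐ k (Istmt α₀ α₁ α₂ α₃) = m from rfl] at hp ⊢
      rw [map_mul]
      have key : ∀ y ∈ S, y * m (X i) ∈ S := by
        intro y hy
        have hmap : S.map (LinearMap.mulRight k (m (X i))) ≤ S := by
          rw [hS, Submodule.map_span, Submodule.span_le]
          rintro z ⟨w, hw, rfl⟩
          simp only [Set.mem_insert_iff, Set.mem_singleton_iff] at hw
          have h01 : ∀ j : Fin 2, j = 0 ∨ j = 1 := by decide
          simp only [LinearMap.mulRight_apply]
          rcases h01 i with rfl | rfl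
          · rcases hw with rfl | rfl | rfl | rfl
            · rw [← map_mul, one_mul]; exact hu
            · rw [← map_mul]
              exact hz _ (by rw [← pow_two]; exact mem_Istmt_u2 _ _ _ _)
            · rw [← map_mul,
                show (X 1 : MvPolynomial (Fin 2) k) * X 0 = X 0 * X 1 from mul_comm _ _]
              exact hue
            · rw [← map_mul]
              exact hz _ (by
                have h' : (X 0 : MvPolynomial (Fin 2) k) * X 1 * X 0 = X 1 * X 0 ^ 2 := by ring
                rw [h']; exact Ideal.mul_mem_left _ _ (mem_Istmt_u2 _ _ _ _))
          · rcases hw with rfl | rfl | rfl | rfl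
            · rw [← map_mul, one_mul]; exact he
            · rw [← map_mul]; exact hue
            · rw [← map_mul]
              exact hz _ (by rw [← pow_two]; exact mem_Istmt_e2 _ _ _ _)
            · rw [← map_mul]
              exact hz _ (by
                have h' : (X 0 : MvPolynomial (Fin 2) k) * X 1 * X 1 = X 0 * X 1 ^ 2 := by ring
                rw [h']; exact Ideal.mul_mem_left _ _ (mem_Istmt_e2 _ _ _ _))
        exact hmap ⟨y, hy, rfl⟩
      exact key _ hp


lemma finrank_case1 (hα : α₀ ≠ 0) :
    Module.finrank k (MvPolynomial (Fin 2) k ⧸ Istmt α₀ α₁ α₂ α₃) = 2 := by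
  set m := mkQ α₀ α₁ α₂ α₃ with hm
  have heu : (X 1 : MvPolynomial (Fin 2) k) * X 0 ∈ Istmt α₀ α₁ α₂ α₃ :=
    cancel_C α₀ α₁ α₂ α₃ hα (smul_eu_mem α₀ α₁ α₂ α₃)
  have he : (X 1 : MvPolynomial (Fin 2) k) ∈ Istmt α₀ α₁ α₂ α₃ :=
    cancel_C α₀ α₁ α₂ α₃ hα (smul_e_mem α₀ α₁ α₂ α₃ heu)
  have hz : ∀ q ∈ Istmt α₀ α₁ α₂ α₃, m q = 0 := by
    intro q hq
    rw [hm, mkQ, Ideal.Quotient.mkₐ_eq_mk, Ideal.Quotient.eq_zero_iff_mem]; exact hq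
  -- spanning
  have hsp : ∀ x : MvPolynomial (Fin 2) k ⧸ Istmt α₀ α₁ α₂ α₃,
      x ∈ Submodule.span k ({m 1, m (X 0)} :
        Set (MvPolynomial (Fin 2) k ⧸ Istmt α₀ α₁ α₂ α₃)) := by
    intro x
    refine Submodule.span_le.mpr ?_ (span4 α₀ α₁ α₂ α₃ x)
    rintro z hz'
    simp only [Set.mem_insert_iff, Set.mem_singleton_iff] at hz'
    rcases hz' with rfl | rfl | rfl | rfl
    · exact Submodule.subset_span (Set.mem_insert _ _)
    · exact Submodule.subset_span (Set.mem_insert_iff.mpr (Or.inr rfl))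
    · rw [SetLike.mem_coe, hz (X 1) he]; exact Submodule.zero_mem _
    · rw [SetLike.mem_coe, hz (X 0 * X 1) (by
        rw [show (X 0 : MvPolynomial (Fin 2) k) * X 1 = X 1 * X 0 from mul_comm _ _]
        exact heu)]
      exact Submodule.zero_mem _
  -- evaluation map
  set gg : Fin 2 → DualNumber k := ![TrivSqZeroExt.inr 1, 0] with hgg
  have hker : ∀ q ∈ Istmt α₀ α₁ α₂ α₃, aeval gg q = 0 := by
    intro q hq
    rw [Istmt] at hq
    have hle : Ideal.span ({(X 1 : MvPolynomial (Fin 2) k) ^ 2, X 0 ^ 2,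
        X 0 ^ 3 + X 1 * (C α₃ * X 0 ^ 3 + C α₂ * X 0 ^ 2 + C α₁ * X 0 + C α₀)}) ≤
        RingHom.ker (aeval gg : MvPolynomial (Fin 2) k →ₐ[k] DualNumber k) := by
      rw [Ideal.span_le]
      rintro q hq'
      simp only [Set.mem_insert_iff, Set.mem_singleton_iff] at hq'
      rcases hq' with rfl | rfl | rfl <;>
        · rw [SetLike.mem_coe, RingHom.mem_ker]
          simp [hgg, pow_succ, pow_two, inr_mul_inr, algebraMap_eq_inl', inl_mul_inr,
            inr_mul_inl]
    exact hle hq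
  -- linear independence
  have li : LinearIndependent k ![(m 1 : MvPolynomial (Fin 2) k ⧸ Istmt α₀ α₁ α₂ α₃), m (X 0)] := by
    rw [Fintype.linearIndependent_iff]
    intro c hc
    rw [Fin.sum_univ_two] at hc
    simp only [Matrix.cons_val_zero, Matrix.cons_val_one, Matrix.head_cons] at hc
    have hcm : m (c 0 • 1 + c 1 • X 0) = 0 := by
      rw [map_add, map_smul, map_smul]; exact hc
    rw [hm, mkQ, Ideal.Quotient.mkₐ_eq_mk, Ideal.Quotient.eq_zero_iff_mem] at hcm
    have hev := hker _ hcm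
    have h0 : c 0 • (1 : DualNumber k) + c 1 • TrivSqZeroExt.inr 1 = 0 := by
      simpa [hgg] using hev
    have hc0 : c 0 = 0 := by have := congrArg TrivSqZeroExt.fst h0; simpa using this
    have hc1 : c 1 = 0 := by have := congrArg TrivSqZeroExt.snd h0; simpa using this
    intro i
    have h01 : ∀ j : Fin 2, j = 0 ∨ j = 1 := by decide
    rcases h01 i with rfl | rfl <;> assumption
  have hb : ⊤ ≤ Submodule.span k (Set.range
      ![(m 1 : MvPolynomial (Fin 2) k ⧸ Istmt α₀ α₁ α₂ α₃), m (X 0)]) := by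
    intro x _
    refine Submodule.span_le.mpr ?_ (hsp x)
    rintro z hz'
    simp only [Set.mem_insert_iff, Set.mem_singleton_iff] at hz'
    rcases hz' with rfl | rfl
    · exact Submodule.subset_span ⟨0, rfl⟩
    · exact Submodule.subset_span ⟨1, rfl⟩
  let b : Module.Basis (Fin 2) k (MvPolynomial (Fin 2) k ⧸ Istmt α₀ α₁ α₂ α₃) := Module.Basis.mk li hb
  rw [Module.finrank_eq_card_basis b, Fintype.card_fin]


lemma smul_eu_mem0 : C α₁ * ((X 1 : MvPolynomial (Fin 2) k) * X 0) ∈ Istmt 0 α₁ α₂ α₃ := by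
  have h : C α₁ * ((X 1 : MvPolynomial (Fin 2) k) * X 0) =
      ((X 0 : MvPolynomial (Fin 2) k) ^ 3
          + X 1 * (C α₃ * X 0 ^ 3 + C α₂ * X 0 ^ 2 + C α₁ * X 0 + C 0))
        - (X 0 + X 1 * (C α₃ * X 0 + C α₂)) * (X 0 ^ 2) := by
    rw [C_0]; ring
  rw [h]
  exact sub_mem (mem_Istmt_g3 0 α₁ α₂ α₃) (Ideal.mul_mem_left _ _ (mem_Istmt_u2 0 α₁ α₂ α₃))

lemma finrank_case2 (hα : α₁ ≠ 0) :
    Module.finrank k (MvPolynomial (Fin 2) k ⧸ Istmt 0 α₁ α₂ α₃) = 3 := by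
  set m := mkQ (0:k) α₁ α₂ α₃ with hm
  have heu : (X 1 : MvPolynomial (Fin 2) k) * X 0 ∈ Istmt 0 α₁ α₂ α₃ :=
    cancel_C 0 α₁ α₂ α₃ hα (smul_eu_mem0 α₁ α₂ α₃)
  have hz : ∀ q ∈ Istmt (0:k) α₁ α₂ α₃, m q = 0 := by
    intro q hq
    rw [hm, mkQ, Ideal.Quotient.mkₐ_eq_mk, Ideal.Quotient.eq_zero_iff_mem]; exact hq
  have hsp : ∀ x : MvPolynomial (Fin 2) k ⧸ Istmt 0 α₁ α₂ α₃,
      x ∈ Submodule.span k ({m 1, m (X 0), m (X 1)} :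
        Set (MvPolynomial (Fin 2) k ⧸ Istmt 0 α₁ α₂ α₃)) := by
    intro x
    refine Submodule.span_le.mpr ?_ (span4 0 α₁ α₂ α₃ x)
    rintro z hz'
    simp only [Set.mem_insert_iff, Set.mem_singleton_iff] at hz'
    rcases hz' with rfl | rfl | rfl | rfl
    · exact Submodule.subset_span (Set.mem_insert _ _)
    · exact Submodule.subset_span (Set.mem_insert_iff.mpr (Or.inr (Set.mem_insert _ _)))
    · exact Submodule.subset_span
        (Set.mem_insert_iff.mpr (Or.inr (Set.mem_insert_iff.mpr (Or.inr rfl))))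
    · rw [SetLike.mem_coe, hz (X 0 * X 1) (by
        rw [show (X 0 : MvPolynomial (Fin 2) k) * X 1 = X 1 * X 0 from mul_comm _ _]
        exact heu)]
      exact Submodule.zero_mem _
  set gg : Fin 2 → TrivSqZeroExt k (k × k) :=
    ![TrivSqZeroExt.inr (1,0), TrivSqZeroExt.inr (0,1)] with hgg
  have hker : ∀ q ∈ Istmt (0:k) α₁ α₂ α₃, aeval gg q = 0 := by
    intro q hq
    rw [Istmt] at hq
    have hle : Ideal.span ({(X 1 : MvPolynomial (Fin 2) k) ^ 2, X 0 ^ 2,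
        X 0 ^ 3 + X 1 * (C α₃ * X 0 ^ 3 + C α₂ * X 0 ^ 2 + C α₁ * X 0 + C 0)}) ≤
        RingHom.ker (aeval gg : MvPolynomial (Fin 2) k →ₐ[k] TrivSqZeroExt k (k × k)) := by
      rw [Ideal.span_le]
      rintro q hq'
      simp only [Set.mem_insert_iff, Set.mem_singleton_iff] at hq'
      rcases hq' with rfl | rfl | rfl <;>
        · rw [SetLike.mem_coe, RingHom.mem_ker]
          simp [hgg, pow_succ, pow_two, inr_mul_inr, algebraMap_eq_inl', inl_mul_inr,
            inr_mul_inl]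
    exact hle hq
  have li : LinearIndependent k
      ![(m 1 : MvPolynomial (Fin 2) k ⧸ Istmt 0 α₁ α₂ α₃), m (X 0), m (X 1)] := by
    rw [Fintype.linearIndependent_iff]
    intro c hc
    rw [Fin.sum_univ_three] at hc
    simp only [Matrix.cons_val_zero, Matrix.cons_val_one, Matrix.head_cons,
      Matrix.cons_val_two, Matrix.tail_cons] at hc
    have hcm : m (c 0 • 1 + c 1 • X 0 + c 2 • X 1) = 0 := by
      rw [map_add, map_add, map_smul, map_smul, map_smul]; exact hc
    rw [hm, mkQ, Ideal.Quotient.mkₐ_eq_mk, Ideal.Quotient.eq_zero_iff_mem] at hcm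
    have hev := hker _ hcm
    have h0 : c 0 • (1 : TrivSqZeroExt k (k × k)) + c 1 • TrivSqZeroExt.inr (1,0)
        + c 2 • TrivSqZeroExt.inr (0,1) = 0 := by
      simpa [hgg] using hev
    have hc0 : c 0 = 0 := by have := congrArg TrivSqZeroExt.fst h0; simpa using this
    have hc1 : c 1 = 0 := by
      have := congrArg (fun x => (TrivSqZeroExt.snd x).1) h0; simpa using this
    have hc2 : c 2 = 0 := by
      have := congrArg (fun x => (TrivSqZeroExt.snd x).2) h0; simpa using this
    intro i
    have h01 : ∀ j : Fin 3, j = 0 ∨ j = 1 ∨ j = 2 := by decide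
    rcases h01 i with rfl | rfl | rfl <;> assumption
  have hb : ⊤ ≤ Submodule.span k (Set.range
      ![(m 1 : MvPolynomial (Fin 2) k ⧸ Istmt 0 α₁ α₂ α₃), m (X 0), m (X 1)]) := by
    intro x _
    refine Submodule.span_le.mpr ?_ (hsp x)
    rintro z hz'
    simp only [Set.mem_insert_iff, Set.mem_singleton_iff] at hz'
    rcases hz' with rfl | rfl | rfl
    · exact Submodule.subset_span ⟨0, rfl⟩
    · exact Submodule.subset_span ⟨1, rfl⟩
    · exact Submodule.subset_span ⟨2, rfl⟩
  let b : Module.Basis (Fin 3) k (MvPolynomial (Fin 2) k ⧸ Istmt 0 α₁ α₂ α₃) := Module.Basis.mk li hb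
  rw [Module.finrank_eq_card_basis b, Fintype.card_fin]


lemma finrank_case3 :
    Module.finrank k (MvPolynomial (Fin 2) k ⧸ Istmt 0 0 α₂ α₃) = 4 := by
  set m := mkQ (0:k) 0 α₂ α₃ with hm
  have hsp := span4 (0:k) 0 α₂ α₃
  set gg : Fin 2 → DualNumber (DualNumber k) :=
    ![TrivSqZeroExt.inl (TrivSqZeroExt.inr 1), TrivSqZeroExt.inr 1] with hgg
  have hker : ∀ q ∈ Istmt (0:k) 0 α₂ α₃, aeval gg q = 0 := by
    intro q hq
    rw [Istmt] at hq
    have hle : Ideal.span ({(X 1 : MvPolynomial (Fin 2) k) ^ 2, X 0 ^ 2,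
        X 0 ^ 3 + X 1 * (C α₃ * X 0 ^ 3 + C α₂ * X 0 ^ 2 + C 0 * X 0 + C 0)}) ≤
        RingHom.ker (aeval gg : MvPolynomial (Fin 2) k →ₐ[k] DualNumber (DualNumber k)) := by
      rw [Ideal.span_le]
      rintro q hq'
      simp only [Set.mem_insert_iff, Set.mem_singleton_iff] at hq'
      rcases hq' with rfl | rfl | rfl <;>
        · rw [SetLike.mem_coe, RingHom.mem_ker]
          simp [hgg, pow_succ, pow_two, ← TrivSqZeroExt.inl_mul, inr_mul_inr,
            algebraMap_eq_inl', inl_mul_inr, inr_mul_inl]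
    exact hle hq
  have li : LinearIndependent k
      ![(m 1 : MvPolynomial (Fin 2) k ⧸ Istmt 0 0 α₂ α₃), m (X 0), m (X 1), m (X 0 * X 1)] := by
    rw [Fintype.linearIndependent_iff]
    intro c hc
    rw [Fin.sum_univ_four] at hc
    simp only [Matrix.cons_val_zero, Matrix.cons_val_one, Matrix.head_cons,
      Matrix.cons_val_two, Matrix.tail_cons, Matrix.cons_val_three] at hc
    have hcm : m (c 0 • 1 + c 1 • X 0 + c 2 • X 1 + c 3 • (X 0 * X 1)) = 0 := by
      rw [map_add, map_add, map_add, map_smul, map_smul, map_smul, map_smul]; exact hc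
    rw [hm, mkQ, Ideal.Quotient.mkₐ_eq_mk, Ideal.Quotient.eq_zero_iff_mem] at hcm
    have hev := hker _ hcm
    have h0 : c 0 • (1 : DualNumber (DualNumber k))
        + c 1 • TrivSqZeroExt.inl (TrivSqZeroExt.inr 1)
        + c 2 • TrivSqZeroExt.inr 1
        + c 3 • (TrivSqZeroExt.inl (TrivSqZeroExt.inr (1:k)) * TrivSqZeroExt.inr 1) = 0 := by
      simpa [hgg] using hev
    have hc0 : c 0 = 0 := by
      have := congrArg (fun x => TrivSqZeroExt.fst (TrivSqZeroExt.fst x)) h0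
      simpa [inl_mul_inr] using this
    have hc1 : c 1 = 0 := by
      have := congrArg (fun x => TrivSqZeroExt.snd (TrivSqZeroExt.fst x)) h0
      simpa [inl_mul_inr] using this
    have hc2 : c 2 = 0 := by
      have := congrArg (fun x => TrivSqZeroExt.fst (TrivSqZeroExt.snd x)) h0
      simpa [inl_mul_inr] using this
    have hc3 : c 3 = 0 := by
      have := congrArg (fun x => TrivSqZeroExt.snd (TrivSqZeroExt.snd x)) h0
      simpa [inl_mul_inr] using this
    intro i
    have h01 : ∀ j : Fin 4, j = 0 ∨ j = 1 ∨ j = 2 ∨ j = 3 := by decide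
    rcases h01 i with rfl | rfl | rfl | rfl <;> assumption
  have hb : ⊤ ≤ Submodule.span k (Set.range
      ![(m 1 : MvPolynomial (Fin 2) k ⧸ Istmt 0 0 α₂ α₃), m (X 0), m (X 1), m (X 0 * X 1)]) := by
    intro x _
    refine Submodule.span_le.mpr ?_ (hsp x)
    rintro z hz'
    simp only [Set.mem_insert_iff, Set.mem_singleton_iff] at hz'
    rcases hz' with rfl | rfl | rfl | rfl
    · exact Submodule.subset_span ⟨0, rfl⟩
    · exact Submodule.subset_span ⟨1, rfl⟩
    · exact Submodule.subset_span ⟨2, rfl⟩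
    · exact Submodule.subset_span ⟨3, rfl⟩
  let b : Module.Basis (Fin 4) k (MvPolynomial (Fin 2) k ⧸ Istmt 0 0 α₂ α₃) := Module.Basis.mk li hb
  rw [Module.finrank_eq_card_basis b, Fintype.card_fin]

end Stmt5Aux

open MvPolynomial in
/-- The morphism `φ : B → C` is flat iff the constant term `α₀` of the glueing polynomial is
nonzero; equivalently the fiber ring `k[u,ε]/(ε², u², u³ + εP)` has `k`-dimension 2 iff
`α₀ ≠ 0`, and dimension 3 or 4 otherwise. -/
theorem stmt5 (k : Type) [Field k] [CharP k 2] (α₀ α₁ α₂ α₃ : k) :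
    letI u : MvPolynomial (Fin 2) k := X 0
    letI ε : MvPolynomial (Fin 2) k := X 1
    letI P : MvPolynomial (Fin 2) k := C α₃ * u ^ 3 + C α₂ * u ^ 2 + C α₁ * u + C α₀
    letI Q := MvPolynomial (Fin 2) k ⧸ Ideal.span {ε ^ 2, u ^ 2, u ^ 3 + ε * P}
    (Module.finrank k Q = 2 ↔ α₀ ≠ 0) ∧
      (α₀ = 0 → Module.finrank k Q = 3 ∨ Module.finrank k Q = 4) := by
  have key2 : α₀ = 0 →
      Module.finrank k (MvPolynomial (Fin 2) k ⧸ Stmt5Aux.Istmt α₀ α₁ α₂ α₃) = 3 ∨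
      Module.finrank k (MvPolynomial (Fin 2) k ⧸ Stmt5Aux.Istmt α₀ α₁ α₂ α₃) = 4 := by
    rintro rfl
    by_cases h1 : α₁ = 0
    · subst h1
      exact Or.inr (Stmt5Aux.finrank_case3 α₂ α₃)
    · exact Or.inl (Stmt5Aux.finrank_case2 α₁ α₂ α₃ h1)
  refine ⟨⟨fun h2 h0 => ?_, fun h0 => Stmt5Aux.finrank_case1 α₀ α₁ α₂ α₃ h0⟩, key2⟩
  rcases key2 h0 with h | h <;> rw [show Module.finrank k
    (MvPolynomial (Fin 2) k ⧸ Stmt5Aux.Istmt α₀ α₁ α₂ α₃) = 2 from h2] at h <;> omega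
end

section
/- The localization of the ring A = k[u^2, u^3+vP, v^2, v^2u, v^3, v^3u] ⊂ k[u,v] at the element P^2 (viewed as a polynomial in a = u^2) equals the localization of the subring k[u^2, u^3+vP, v^2u] at P^2; in particular A_{P^2} is generated by three elements. -/
open MvPolynomial in
/-- The localization of `A = k[u², u³+vP, v², v²u, v³, v³u]` at `P²` equals the localization
of the subring `k[u², u³+vP, v²u]` at `P²`; in particular `A_{P²}` is generated by three
elements. -/
theorem stmt7 (k : Type) [Field k] [CharP k 2] (α₀ α₁ α₂ α₃ : k) (hα₀ : α₀ ≠ 0) :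
    letI u : MvPolynomial (Fin 2) k := X 0
    letI v : MvPolynomial (Fin 2) k := X 1
    letI P : MvPolynomial (Fin 2) k := C α₃ * u ^ 3 + C α₂ * u ^ 2 + C α₁ * u + C α₀
    letI A : Subalgebra k (MvPolynomial (Fin 2) k) :=
      Algebra.adjoin k {u ^ 2, u ^ 3 + v * P, v ^ 2, v ^ 2 * u, v ^ 3, v ^ 3 * u}
    letI B : Subalgebra k (MvPolynomial (Fin 2) k) :=
      Algebra.adjoin k {u ^ 2, u ^ 3 + v * P, v ^ 2 * u}
    B ≤ A ∧ ∀ x ∈ A, ∃ n : ℕ, (P ^ 2) ^ n * x ∈ B := by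
  set u : MvPolynomial (Fin 2) k := X 0 with hu
  set v : MvPolynomial (Fin 2) k := X 1 with hv
  set P : MvPolynomial (Fin 2) k := C α₃ * u ^ 3 + C α₂ * u ^ 2 + C α₁ * u + C α₀ with hP
  set A : Subalgebra k (MvPolynomial (Fin 2) k) :=
    Algebra.adjoin k {u ^ 2, u ^ 3 + v * P, v ^ 2, v ^ 2 * u, v ^ 3, v ^ 3 * u} with hA
  set B : Subalgebra k (MvPolynomial (Fin 2) k) :=
    Algebra.adjoin k {u ^ 2, u ^ 3 + v * P, v ^ 2 * u} with hB
  have htwo : (2 : MvPolynomial (Fin 2) k) = 0 := by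
    have h : ((2 : ℕ) : MvPolynomial (Fin 2) k) = 0 := CharP.cast_eq_zero _ 2
    exact_mod_cast h
  -- basic memberships in B
  have hs : u ^ 2 ∈ B := Algebra.subset_adjoin (by simp)
  have hw : u ^ 3 + v * P ∈ B := Algebra.subset_adjoin (by simp)
  have ht : v ^ 2 * u ∈ B := Algebra.subset_adjoin (by simp)
  have hCmem : ∀ a : k, C a ∈ B := fun a => by
    simpa [MvPolynomial.algebraMap_eq] using B.algebraMap_mem a
  have hE : C α₂ * u ^ 2 + C α₀ ∈ B := add_mem (mul_mem (hCmem α₂) hs) (hCmem α₀)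
  have hO : C α₃ * u ^ 2 + C α₁ ∈ B := add_mem (mul_mem (hCmem α₃) hs) (hCmem α₁)
  -- P² as a polynomial in u²
  have hP2eq : P ^ 2 = (C α₂ * u ^ 2 + C α₀) ^ 2 + u ^ 2 * (C α₃ * u ^ 2 + C α₁) ^ 2 := by
    rw [hP]
    linear_combination (u * (C α₂ * u ^ 2 + C α₀) * (C α₃ * u ^ 2 + C α₁)) * htwo
  have hP2B : P ^ 2 ∈ B := by
    rw [hP2eq]; exact add_mem (pow_mem hE 2) (mul_mem hs (pow_mem hO 2))
  -- key char-2 identities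
  have hQ : P ^ 2 * v ^ 2 = (u ^ 3 + v * P) ^ 2 + (u ^ 2) ^ 3 := by
    rw [hP]
    linear_combination (-(u ^ 3 * v * (C α₃ * u ^ 3 + C α₂ * u ^ 2 + C α₁ * u + C α₀))
      - u ^ 6) * htwo
  have h_uQ : u * ((u ^ 3 + v * P) ^ 2 + (u ^ 2) ^ 3) = (v ^ 2 * u) * P ^ 2 := by
    rw [hP]
    linear_combination (u ^ 7 + u ^ 4 * v * (C α₃ * u ^ 3 + C α₂ * u ^ 2 + C α₁ * u + C α₀))
      * htwo
  have hvP2 : v * P ^ 2 = ((u ^ 3 + v * P) * (C α₂ * u ^ 2 + C α₀)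
      + (u ^ 2) ^ 2 * (C α₃ * u ^ 2 + C α₁))
      + u * ((u ^ 3 + v * P) * (C α₃ * u ^ 2 + C α₁) + u ^ 2 * (C α₂ * u ^ 2 + C α₀)) := by
    rw [hP]
    linear_combination (-(u ^ 3 * (C α₂ * u ^ 2 + C α₀)) - u ^ 4 * (C α₃ * u ^ 2 + C α₁)) * htwo
  have h_v3 : (P ^ 2) ^ 2 * v ^ 3 =
      ((u ^ 3 + v * P) ^ 2 + (u ^ 2) ^ 3) * ((u ^ 3 + v * P) * (C α₂ * u ^ 2 + C α₀)
        + (u ^ 2) ^ 2 * (C α₃ * u ^ 2 + C α₁))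
      + (v ^ 2 * u) * P ^ 2 * ((u ^ 3 + v * P) * (C α₃ * u ^ 2 + C α₁)
        + u ^ 2 * (C α₂ * u ^ 2 + C α₀)) := by
    linear_combination (v ^ 2 * P ^ 2) * hvP2 + ((u ^ 3 + v * P) * (C α₂ * u ^ 2 + C α₀)
      + (u ^ 2) ^ 2 * (C α₃ * u ^ 2 + C α₁)) * hQ
  have h_v3u : (P ^ 2) ^ 3 * (v ^ 3 * u) =
      (v ^ 2 * u) * (P ^ 2) ^ 2 * ((u ^ 3 + v * P) * (C α₂ * u ^ 2 + C α₀)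
        + (u ^ 2) ^ 2 * (C α₃ * u ^ 2 + C α₁))
      + u ^ 2 * ((u ^ 3 + v * P) ^ 2 + (u ^ 2) ^ 3) * P ^ 2
        * ((u ^ 3 + v * P) * (C α₃ * u ^ 2 + C α₁) + u ^ 2 * (C α₂ * u ^ 2 + C α₀)) := by
    linear_combination (u * P ^ 2) * h_v3
      + (P ^ 2 * ((u ^ 3 + v * P) * (C α₂ * u ^ 2 + C α₀)
          + (u ^ 2) ^ 2 * (C α₃ * u ^ 2 + C α₁))) * h_uQ
      + (u ^ 2 * P ^ 2 * ((u ^ 3 + v * P) * (C α₃ * u ^ 2 + C α₁)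
          + u ^ 2 * (C α₂ * u ^ 2 + C α₀))) * hQ
  constructor
  · exact Algebra.adjoin_mono (by
      intro x hx
      simp only [Set.mem_insert_iff, Set.mem_singleton_iff] at hx ⊢
      rcases hx with h | h | h
      · exact Or.inl h
      · exact Or.inr (Or.inl h)
      · exact Or.inr (Or.inr (Or.inr (Or.inl h))))
  · intro x hx
    induction hx using Algebra.adjoin_induction with
    | mem z hz =>
      simp only [Set.mem_insert_iff, Set.mem_singleton_iff] at hz
      rcases hz with h | h | h | h | h | h
      · exact ⟨0, by rw [h, pow_zero, one_mul]; exact hs⟩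
      · exact ⟨0, by rw [h, pow_zero, one_mul]; exact hw⟩
      · refine ⟨1, ?_⟩
        rw [h, pow_one, hQ]
        exact add_mem (pow_mem hw 2) (pow_mem hs 3)
      · exact ⟨0, by rw [h, pow_zero, one_mul]; exact ht⟩
      · refine ⟨2, ?_⟩
        rw [h, h_v3]
        exact add_mem
          (mul_mem (add_mem (pow_mem hw 2) (pow_mem hs 3))
            (add_mem (mul_mem hw hE) (mul_mem (pow_mem hs 2) hO)))
          (mul_mem (mul_mem ht hP2B) (add_mem (mul_mem hw hO) (mul_mem hs hE)))
      · refine ⟨3, ?_⟩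
        rw [h, h_v3u]
        exact add_mem
          (mul_mem (mul_mem ht (pow_mem hP2B 2))
            (add_mem (mul_mem hw hE) (mul_mem (pow_mem hs 2) hO)))
          (mul_mem (mul_mem (mul_mem hs (add_mem (pow_mem hw 2) (pow_mem hs 3))) hP2B)
            (add_mem (mul_mem hw hO) (mul_mem hs hE)))
    | algebraMap r => exact ⟨0, by rw [pow_zero, one_mul]; exact B.algebraMap_mem r⟩
    | add x y hx hy ihx ihy =>
      obtain ⟨m, hm⟩ := ihx
      obtain ⟨n, hn⟩ := ihy
      refine ⟨m + n, ?_⟩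
      have h : (P ^ 2) ^ (m + n) * (x + y)
          = (P ^ 2) ^ n * ((P ^ 2) ^ m * x) + (P ^ 2) ^ m * ((P ^ 2) ^ n * y) := by
        rw [pow_add]; ring
      rw [h]
      exact add_mem (mul_mem (pow_mem hP2B n) hm) (mul_mem (pow_mem hP2B m) hn)
    | mul x y hx hy ihx ihy =>
      obtain ⟨m, hm⟩ := ihx
      obtain ⟨n, hn⟩ := ihy
      refine ⟨m + n, ?_⟩
      have h : (P ^ 2) ^ (m + n) * (x * y) = ((P ^ 2) ^ m * x) * ((P ^ 2) ^ n * y) := by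
        rw [pow_add]; ring
      rw [h]
      exact mul_mem hm hn
end

section
/- The ring R' = k(a,c)[x_1,x_2]/(x_1^2 + a^3 + c·P(a)^2, x_2^2 + c^3) is a field, where P(a)^2 = α_3^2a^3 + α_2^2a^2 + α_1^2a + α_0^2 with α_0 ≠ 0. -/
open MvPolynomial

set_option maxHeartbeats 1000000 in
set_option synthInstance.maxHeartbeats 400000 in
lemma key (K : Type) [Field K] (h2 : (2:K) = 0) (b₁ b₂ : K)
    (H1 : ∀ x : K, x ^ 2 ≠ b₁)
    (H2 : ∀ u v : K, u ^ 2 + v ^ 2 * b₁ ≠ b₂) :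
    IsField (MvPolynomial (Fin 2) K ⧸
      Ideal.span {X 0 ^ 2 + C b₁, X 1 ^ 2 + C b₂}) := by
  set I : Ideal (MvPolynomial (Fin 2) K) := Ideal.span {X 0 ^ 2 + C b₁, X 1 ^ 2 + C b₂} with hI
  have h2A : (2 : MvPolynomial (Fin 2) K ⧸ I) = 0 := by
    have : (2 : MvPolynomial (Fin 2) K ⧸ I) = algebraMap K _ 2 :=
      (map_ofNat (algebraMap K (MvPolynomial (Fin 2) K ⧸ I)) 2).symm
    rw [this, h2, map_zero]
  have hgen1 : Ideal.Quotient.mk I (X 0 ^ 2 + C b₁) = 0 := Ideal.Quotient.eq_zero_iff_mem.2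
    (Ideal.subset_span (by simp))
  have hgen2 : Ideal.Quotient.mk I (X 1 ^ 2 + C b₂) = 0 := Ideal.Quotient.eq_zero_iff_mem.2
    (Ideal.subset_span (by simp))
  have hξ : (Ideal.Quotient.mk I (X 0)) ^ 2 = Ideal.Quotient.mk I (C b₁) := by
    rw [map_add, map_pow] at hgen1
    linear_combination hgen1 - Ideal.Quotient.mk I (C b₁) * h2A
  have hη : (Ideal.Quotient.mk I (X 1)) ^ 2 = Ideal.Quotient.mk I (C b₂) := by
    rw [map_add, map_pow] at hgen2
    linear_combination hgen2 - Ideal.Quotient.mk I (C b₂) * h2A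
  have NF : ∀ z : MvPolynomial (Fin 2) K ⧸ I, ∃ p q r s : K,
      z = Ideal.Quotient.mk I (C p) + Ideal.Quotient.mk I (C q) * Ideal.Quotient.mk I (X 0)
        + Ideal.Quotient.mk I (C r) * Ideal.Quotient.mk I (X 1)
        + Ideal.Quotient.mk I (C s) * Ideal.Quotient.mk I (X 0) * Ideal.Quotient.mk I (X 1) := by
    intro z
    obtain ⟨f, rfl⟩ := Ideal.Quotient.mk_surjective z
    induction f using MvPolynomial.induction_on with
    | C r => exact ⟨r, 0, 0, 0, by simp⟩
    | add f g hf hg =>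
      obtain ⟨p₁, q₁, r₁, s₁, h₁⟩ := hf
      obtain ⟨p₂, q₂, r₂, s₂, h₂⟩ := hg
      refine ⟨p₁+p₂, q₁+q₂, r₁+r₂, s₁+s₂, ?_⟩
      simp only [C_add, map_add]
      rw [h₁, h₂]; ring
    | mul_X f i hf =>
      obtain ⟨p, q, r, s, h⟩ := hf
      fin_cases i
      · refine ⟨q*b₁, p, s*b₁, r, ?_⟩
        simp only [C_mul, map_mul]
        rw [show (Fin.mk 0 (by norm_num) : Fin 2) = 0 from rfl]
        linear_combination h * Ideal.Quotient.mk I (X 0)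
          + (Ideal.Quotient.mk I (C q) + Ideal.Quotient.mk I (C s) * Ideal.Quotient.mk I (X 1)) * hξ
      · refine ⟨r*b₂, s*b₂, p, q, ?_⟩
        simp only [C_mul, map_mul]
        rw [show (Fin.mk 1 (by norm_num) : Fin 2) = 1 from rfl]
        linear_combination h * Ideal.Quotient.mk I (X 1)
          + (Ideal.Quotient.mk I (C r) + Ideal.Quotient.mk I (C s) * Ideal.Quotient.mk I (X 0)) * hη
  -- nontriviality
  obtain ⟨r₁, hr₁⟩ := IsAlgClosed.exists_pow_nat_eq (k := AlgebraicClosure K)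
    (algebraMap K _ b₁) zero_lt_two
  obtain ⟨r₂, hr₂⟩ := IsAlgClosed.exists_pow_nat_eq (k := AlgebraicClosure K)
    (algebraMap K _ b₂) zero_lt_two
  have h2C : (2 : AlgebraicClosure K) = 0 := by
    have : (2 : AlgebraicClosure K) = algebraMap K _ 2 :=
      (map_ofNat (algebraMap K (AlgebraicClosure K)) 2).symm
    rw [this, h2, map_zero]
  set ψ : MvPolynomial (Fin 2) K →+* AlgebraicClosure K :=
    (eval₂Hom (algebraMap K (AlgebraicClosure K)) (fun i => if i = 0 then r₁ else r₂)) with hψ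
  have hker : I ≤ RingHom.ker ψ := by
    rw [hI, Ideal.span_le]
    intro g hg
    simp only [Set.mem_insert_iff, Set.mem_singleton_iff] at hg
    rcases hg with rfl | rfl
    · have : ψ (X 0 ^ 2 + C b₁) = r₁ ^ 2 + algebraMap K _ b₁ := by
        simp [hψ]
      rw [SetLike.mem_coe, RingHom.mem_ker, this, hr₁]
      linear_combination algebraMap K (AlgebraicClosure K) b₁ * h2C
    · have : ψ (X 1 ^ 2 + C b₂) = r₂ ^ 2 + algebraMap K _ b₂ := by
        simp [hψ]
      rw [SetLike.mem_coe, RingHom.mem_ker, this, hr₂]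
      linear_combination algebraMap K (AlgebraicClosure K) b₂ * h2C
  have hnt : (0 : MvPolynomial (Fin 2) K ⧸ I) ≠ 1 := by
    intro h
    have h1 : (1 : MvPolynomial (Fin 2) K) ∈ I :=
      Ideal.Quotient.eq_zero_iff_mem.1 (by rw [map_one, ← h])
    have := hker h1
    rw [RingHom.mem_ker, map_one] at this
    exact one_ne_zero this
  have hsq : ∀ x y : MvPolynomial (Fin 2) K ⧸ I, (x + y) ^ 2 = x ^ 2 + y ^ 2 := fun x y => by
    linear_combination x * y * h2A
  refine ⟨⟨0, 1, hnt⟩, mul_comm, ?_⟩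
  intro z hz
  obtain ⟨p, q, r, s, hzeq⟩ := NF z
  have hzsq : z ^ 2 = Ideal.Quotient.mk I (C (p^2 + q^2*b₁ + (r^2 + s^2*b₁)*b₂)) := by
    have e1 : z = (Ideal.Quotient.mk I (C p) + Ideal.Quotient.mk I (C q) * Ideal.Quotient.mk I (X 0))
        + (Ideal.Quotient.mk I (C r) + Ideal.Quotient.mk I (C s) * Ideal.Quotient.mk I (X 0))
          * Ideal.Quotient.mk I (X 1) := by
      rw [hzeq]; ring
    rw [e1, hsq, mul_pow, hsq, hsq, mul_pow, mul_pow, hξ, hη]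
    simp only [C_add, C_mul, C_pow, map_add, map_mul, map_pow]
    try ring
  by_cases hw : p^2 + q^2*b₁ + (r^2 + s^2*b₁)*b₂ = 0
  · exfalso
    have hD : r^2 + s^2*b₁ = 0 := by
      by_contra hD
      apply H2 ((p*r + q*s*b₁)/(r^2+s^2*b₁)) ((p*s + q*r)/(r^2+s^2*b₁))
      field_simp
      linear_combination (r^2+s^2*b₁) * hw + (2*p*q*r*s*b₁ - (r^2+s^2*b₁)^2*b₂) * h2
    have hs0 : s = 0 := by
      by_contra hs
      apply H1 (r / s)
      field_simp
      linear_combination hD - s^2*b₁*h2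
    have hr0 : r = 0 := by
      rw [hs0] at hD; simpa using hD
    rw [hr0, hs0] at hw
    simp only [ne_eq, OfNat.ofNat_ne_zero, not_false_eq_true, zero_pow, zero_mul, add_zero,
      zero_add, mul_zero] at hw
    have hq0 : q = 0 := by
      by_contra hq
      apply H1 (p / q)
      field_simp
      linear_combination hw - q^2*b₁*h2
    have hp0 : p = 0 := by
      rw [hq0] at hw; simpa using hw
    rw [hp0, hq0, hr0, hs0] at hzeq
    simp at hzeq
    exact hz hzeq
  · refine ⟨z * Ideal.Quotient.mk I (C (p^2 + q^2*b₁ + (r^2 + s^2*b₁)*b₂)⁻¹), ?_⟩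
    rw [← mul_assoc, ← sq, hzsq, ← map_mul, ← C_mul, mul_inv_cancel₀ hw, C_1, map_one]
section
variable {k : Type} [Field k] [CharP k 2] {α₀ α₁ α₂ α₃ : k}

lemma h2R : (2 : MvPolynomial (Fin 2) k) = 0 := by
  exact_mod_cast CharP.cast_eq_zero (MvPolynomial (Fin 2) k) 2

lemma pderiv_sq (i : Fin 2) (f : MvPolynomial (Fin 2) k) : pderiv i (f ^ 2) = 0 := by
  rw [pderiv_pow, Nat.cast_ofNat, h2R]; ring

lemma pd1B : pderiv 1 (X 0 ^ 3 + X 1 * (C (α₃^2) * X 0 ^ 3 + C (α₂^2) * X 0 ^ 2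
      + C (α₁^2) * X 0 + C (α₀^2)) : MvPolynomial (Fin 2) k) =
    C (α₃^2) * X 0 ^ 3 + C (α₂^2) * X 0 ^ 2 + C (α₁^2) * X 0 + C (α₀^2) := by
  simp [pderiv_mul, pderiv_pow, pderiv_X_self,
    pderiv_X_of_ne (show (0:Fin 2) ≠ 1 by decide), pderiv_C]

lemma pd0B : pderiv 0 (X 0 ^ 3 + X 1 * (C (α₃^2) * X 0 ^ 3 + C (α₂^2) * X 0 ^ 2
      + C (α₁^2) * X 0 + C (α₀^2)) : MvPolynomial (Fin 2) k) =
    X 0 ^ 2 + X 1 * (C α₃ ^ 2 * X 0 ^ 2 + C α₁ ^ 2) := by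
  simp [pderiv_mul, pderiv_pow, pderiv_X_self,
    pderiv_X_of_ne (show (1:Fin 2) ≠ 0 by decide), pderiv_C]
  linear_combination (X 0 ^ 2 + X 1 * (C α₃ ^ 2 * X 0 ^ 2 + C α₂ ^ 2 * X 0)) * (h2R (k := k))

lemma pd0B_ne : (X 0 ^ 2 + X 1 * (C α₃ ^ 2 * X 0 ^ 2 + C α₁ ^ 2) : MvPolynomial (Fin 2) k) ≠ 0 := by
  intro h
  have := congrArg (aeval (fun i : Fin 2 => if i = 0 then (Polynomial.X : Polynomial k) else 0)) h
  simp at this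


lemma Q_ne (hα₀ : α₀ ≠ 0) : (C (α₃^2) * X 0 ^ 3 + C (α₂^2) * X 0 ^ 2
      + C (α₁^2) * X 0 + C (α₀^2) : MvPolynomial (Fin 2) k) ≠ 0 := by
  intro h
  have := congrArg constantCoeff h
  simp [constantCoeff_X] at this
  exact hα₀ this

end



set_option maxHeartbeats 1000000
set_option synthInstance.maxHeartbeats 1000000

section
variable {k : Type} [Field k] [CharP k 2] {α₀ α₁ α₂ α₃ : k}

lemma pd0X13 : pderiv 0 (X 1 ^ 3 : MvPolynomial (Fin 2) k) = 0 := by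
  rw [pderiv_pow, pderiv_X_of_ne (show (1:Fin 2) ≠ 0 by decide)]; ring

lemma pd1X13 : pderiv 1 (X 1 ^ 3 : MvPolynomial (Fin 2) k) = X 1 ^ 2 := by
  rw [pderiv_pow, pderiv_X_self]
  have h3 : ((3 : ℕ) : MvPolynomial (Fin 2) k) = 1 := by
    push_cast
    linear_combination (h2R (k := k))
  rw [h3]; ring

lemma H1aux (hα₀ : α₀ ≠ 0) (x : FractionRing (MvPolynomial (Fin 2) k))
    (hx : x ^ 2 = algebraMap (MvPolynomial (Fin 2) k) _ (X 0 ^ 3 + X 1 * (C (α₃^2) * X 0 ^ 3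
      + C (α₂^2) * X 0 ^ 2 + C (α₁^2) * X 0 + C (α₀^2)))) : False := by
  obtain ⟨p, q, hq, hu⟩ := IsFractionRing.div_surjective (A := MvPolynomial (Fin 2) k) x
  have hq0 : q ≠ 0 := nonZeroDivisors.ne_zero hq
  have hqK : algebraMap (MvPolynomial (Fin 2) k) (FractionRing (MvPolynomial (Fin 2) k)) q ≠ 0 :=
    IsFractionRing.to_map_ne_zero_of_mem_nonZeroDivisors (K := FractionRing (MvPolynomial (Fin 2) k)) hq
  rw [← hu, div_pow, div_eq_iff (pow_ne_zero 2 hqK)] at hx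
  have E : p ^ 2 = (X 0 ^ 3 + X 1 * (C (α₃^2) * X 0 ^ 3
      + C (α₂^2) * X 0 ^ 2 + C (α₁^2) * X 0 + C (α₀^2))) * q ^ 2 := by
    apply IsFractionRing.injective (MvPolynomial (Fin 2) k) (FractionRing (MvPolynomial (Fin 2) k))
    simp only [map_add, map_mul, map_pow] at hx ⊢
    linear_combination hx
  have l1 : pderiv 1 ((X 0 ^ 3 + X 1 * (C (α₃^2) * X 0 ^ 3
      + C (α₂^2) * X 0 ^ 2 + C (α₁^2) * X 0 + C (α₀^2))) * q ^ 2)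
      = (C (α₃^2) * X 0 ^ 3 + C (α₂^2) * X 0 ^ 2 + C (α₁^2) * X 0 + C (α₀^2)) * q ^ 2 := by
    rw [pderiv_mul, pderiv_sq, pd1B]; ring
  have hD := congrArg (pderiv 1) E
  rw [pderiv_sq, l1] at hD
  rcases mul_eq_zero.1 hD.symm with h | h
  · exact Q_ne hα₀ h
  · exact hq0 (pow_eq_zero_iff (by norm_num)|>.1 h)

lemma H2aux (hα₀ : α₀ ≠ 0) (u v : FractionRing (MvPolynomial (Fin 2) k))
    (h : u ^ 2 + v ^ 2 * algebraMap (MvPolynomial (Fin 2) k) _ (X 0 ^ 3 + X 1 * (C (α₃^2) * X 0 ^ 3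
      + C (α₂^2) * X 0 ^ 2 + C (α₁^2) * X 0 + C (α₀^2)))
      = algebraMap (MvPolynomial (Fin 2) k) _ (X 1 ^ 3)) : False := by
  obtain ⟨U, W₁, hW₁, hu⟩ := IsFractionRing.div_surjective (A := MvPolynomial (Fin 2) k) u
  obtain ⟨V, W₂, hW₂, hv⟩ := IsFractionRing.div_surjective (A := MvPolynomial (Fin 2) k) v
  have hW₁0 : W₁ ≠ 0 := nonZeroDivisors.ne_zero hW₁
  have hW₂0 : W₂ ≠ 0 := nonZeroDivisors.ne_zero hW₂
  have hW₁K : algebraMap (MvPolynomial (Fin 2) k) (FractionRing (MvPolynomial (Fin 2) k)) W₁ ≠ 0 :=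
    IsFractionRing.to_map_ne_zero_of_mem_nonZeroDivisors (K := FractionRing (MvPolynomial (Fin 2) k)) hW₁
  have hW₂K : algebraMap (MvPolynomial (Fin 2) k) (FractionRing (MvPolynomial (Fin 2) k)) W₂ ≠ 0 :=
    IsFractionRing.to_map_ne_zero_of_mem_nonZeroDivisors (K := FractionRing (MvPolynomial (Fin 2) k)) hW₂
  rw [← hu, ← hv] at h
  have E : U ^ 2 * W₂ ^ 2 + (X 0 ^ 3 + X 1 * (C (α₃^2) * X 0 ^ 3
      + C (α₂^2) * X 0 ^ 2 + C (α₁^2) * X 0 + C (α₀^2))) * V ^ 2 * W₁ ^ 2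
      = X 1 ^ 3 * W₁ ^ 2 * W₂ ^ 2 := by
    apply IsFractionRing.injective (MvPolynomial (Fin 2) k) (FractionRing (MvPolynomial (Fin 2) k))
    field_simp [hW₁K, hW₂K] at h
    simp only [map_add, map_mul, map_pow] at h ⊢
    linear_combination h
  have l1 : pderiv 0 (U ^ 2 * W₂ ^ 2 : MvPolynomial (Fin 2) k) = 0 := by
    rw [pderiv_mul, pderiv_sq, pderiv_sq]; ring
  have l2 : pderiv 0 ((X 0 ^ 3 + X 1 * (C (α₃^2) * X 0 ^ 3
      + C (α₂^2) * X 0 ^ 2 + C (α₁^2) * X 0 + C (α₀^2))) * V ^ 2 * W₁ ^ 2)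
      = (X 0 ^ 2 + X 1 * (C α₃ ^ 2 * X 0 ^ 2 + C α₁ ^ 2)) * (V ^ 2 * W₁ ^ 2) := by
    rw [pderiv_mul, pderiv_mul, pderiv_sq, pderiv_sq, pd0B]; ring
  have l3 : pderiv 0 (X 1 ^ 3 * W₁ ^ 2 * W₂ ^ 2 : MvPolynomial (Fin 2) k) = 0 := by
    rw [pderiv_mul, pderiv_mul, pd0X13, pderiv_sq, pderiv_sq]; ring
  have hD0 := congrArg (pderiv 0) E
  rw [map_add, l1, l2, l3, zero_add] at hD0
  have hV : V = 0 := by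
    rcases mul_eq_zero.1 hD0 with h' | h'
    · exact absurd h' pd0B_ne
    · rcases mul_eq_zero.1 h' with h'' | h''
      · exact pow_eq_zero_iff (n := 2) (by norm_num) |>.1 h''
      · exact absurd (pow_eq_zero_iff (n := 2) (by norm_num) |>.1 h'') hW₁0
  rw [hV] at E
  have E' : U ^ 2 * W₂ ^ 2 = X 1 ^ 3 * W₁ ^ 2 * W₂ ^ 2 := by linear_combination E
  have l4 : pderiv 1 (U ^ 2 * W₂ ^ 2 : MvPolynomial (Fin 2) k) = 0 := by
    rw [pderiv_mul, pderiv_sq, pderiv_sq]; ring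
  have l5 : pderiv 1 (X 1 ^ 3 * W₁ ^ 2 * W₂ ^ 2 : MvPolynomial (Fin 2) k)
      = X 1 ^ 2 * (W₁ ^ 2 * W₂ ^ 2) := by
    rw [pderiv_mul, pderiv_mul, pd1X13, pderiv_sq, pderiv_sq]; ring
  have hD1 := congrArg (pderiv 1) E'
  rw [l4, l5] at hD1
  rcases mul_eq_zero.1 hD1.symm with h' | h'
  · exact X_ne_zero 1 (pow_eq_zero_iff (n := 2) (by norm_num) |>.1 h')
  · rcases mul_eq_zero.1 h' with h'' | h''
    · exact hW₁0 (pow_eq_zero_iff (n := 2) (by norm_num) |>.1 h'')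
    · exact hW₂0 (pow_eq_zero_iff (n := 2) (by norm_num) |>.1 h'')

end


open MvPolynomial in
/-- The ring `R' = k(a,c)[x₁,x₂]/(x₁² + a³ + c·P², x₂² + c³)` is a field, where
`P² = α₃²a³ + α₂²a² + α₁²a + α₀²` with `α₀ ≠ 0`. -/
theorem stmt8 (k : Type) [Field k] [CharP k 2] (α₀ α₁ α₂ α₃ : k) (hα₀ : α₀ ≠ 0) :
    letI K := FractionRing (MvPolynomial (Fin 2) k)
    letI a : K := algebraMap (MvPolynomial (Fin 2) k) K (X 0)
    letI c : K := algebraMap (MvPolynomial (Fin 2) k) K (X 1)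
    letI P2 : K := algebraMap k K (α₃ ^ 2) * a ^ 3 + algebraMap k K (α₂ ^ 2) * a ^ 2
      + algebraMap k K (α₁ ^ 2) * a + algebraMap k K (α₀ ^ 2)
    IsField (MvPolynomial (Fin 2) K ⧸
      Ideal.span {X 0 ^ 2 + C (a ^ 3 + c * P2), X 1 ^ 2 + C (c ^ 3)}) := by
  set R := MvPolynomial (Fin 2) k with hR
  set K := FractionRing (MvPolynomial (Fin 2) k) with hK
  have h2K : (2 : K) = 0 := by
    have : (2 : K) = algebraMap k K 2 := (map_ofNat (algebraMap k K) 2).symm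
    rw [this, show (2 : k) = 0 by exact_mod_cast CharP.cast_eq_zero k 2, map_zero]
  have halg : ∀ y : k, algebraMap k K y = algebraMap R K (C y) := by
    intro y
    rw [IsScalarTower.algebraMap_apply k R K]
    congr 1
  have hb : algebraMap R K (X 0) ^ 3 + algebraMap R K (X 1) *
      (algebraMap k K (α₃ ^ 2) * algebraMap R K (X 0) ^ 3
        + algebraMap k K (α₂ ^ 2) * algebraMap R K (X 0) ^ 2
        + algebraMap k K (α₁ ^ 2) * algebraMap R K (X 0) + algebraMap k K (α₀ ^ 2))
      = algebraMap R K (X 0 ^ 3 + X 1 * (C (α₃^2) * X 0 ^ 3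
        + C (α₂^2) * X 0 ^ 2 + C (α₁^2) * X 0 + C (α₀^2))) := by
    simp only [map_add, map_mul, map_pow, halg]
  have hc : algebraMap R K (X 1) ^ 3 = algebraMap R K (X 1 ^ 3) := (map_pow _ _ _).symm
  rw [hb, hc]
  exact key K h2K _ _
    (fun x hx => absurd (H1aux hα₀ x hx) not_false)
    (fun u v huv => absurd (H2aux hα₀ u v huv) not_false)
end

section
/- The complete local ring k[[u^{-2}, u^{-1}+vu^{-4}P, v^2u^{-2}, v^2u^{-3}, v^3u^{-3}, v^3u^{-4}]] is isomorphic to k[[x,y,z]]/(y^3 + z^2), via x = u^{-1}+vu^{-4}P, y = v^2u^{-2}, z = v^3u^{-3}; in particular it is a complete intersection. -/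
/-!
The map factors as the substitution `X ↦ s, Y ↦ m², Z ↦ m³` followed by the shear
`s ↦ s + m P(s), m ↦ m`, which has a left inverse and so does not change the kernel.
Division by `Y³ + Z²`, monic of degree 2 in `Z` modulo `Y`, leaves a remainder of `Z`-degree at
most 1, and the monomials `s^a m^(2b + 3c)` with `c ≤ 1` are pairwise distinct; hence the kernel
is `(Y³ + Z²)`.
For the image, in characteristic 2 the element `s²` solves the `m`-adically contracting equation
`s² = x² + y P'(s²)`, `P'` the Frobenius twist of `P`, and then `m² s`, `m³ s` solve a linear
system over the image whose determinant is a unit.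
-/

namespace MvPowerSeries

variable {σ R : Type*} [CommRing R]

theorem eq_zero_of_forall_X_pow_dvd {j : σ} {F : MvPowerSeries σ R} (h : ∀ n, X j ^ n ∣ F) :
    F = 0 :=
  ext fun e => X_pow_dvd_iff.mp (h (e j + 1)) e (Nat.lt_succ_self _)

/-- Banach's fixed point theorem for the `X j`-adic topology. -/
theorem existsUnique_fixedPoint_of_contracting (j : σ)
    {Ψ : MvPowerSeries σ R → MvPowerSeries σ R}
    (hΨ : ∀ n F G, X j ^ n ∣ F - G → X j ^ (n + 1) ∣ Ψ F - Ψ G) : ∃! F, Ψ F = F := by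
  set u : ℕ → MvPowerSeries σ R := fun n => Ψ^[n] 0
  have hu : ∀ n i, X j ^ n ∣ u n - u (n + i) := by
    intro n
    induction n with
    | zero => simp
    | succ n ih =>
      intro i
      simpa only [u, Nat.add_right_comm n 1 i, Function.iterate_succ_apply'] using
        hΨ n _ _ (ih i)
  let F : MvPowerSeries σ R := fun e => coeff e (u (e j + 1))
  have hF : ∀ n, X j ^ n ∣ F - u n := by
    intro n
    refine X_pow_dvd_iff.mpr fun e he => ?_
    obtain ⟨i, hi⟩ := Nat.exists_eq_add_of_le (Nat.succ_le_of_lt he)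
    have := X_pow_dvd_iff.mp (hu (e j + 1) i) e (Nat.lt_succ_self _)
    rw [map_sub, sub_eq_zero] at this ⊢
    rwa [hi]
  have hfix : Ψ F = F := by
    refine sub_eq_zero.mp (eq_zero_of_forall_X_pow_dvd (j := j) fun n => ?_)
    have h1 : Ψ F - F = (Ψ F - Ψ (u n)) - (F - u (n + 1)) := by
      simp only [u, Function.iterate_succ_apply']
      ring
    rw [h1]
    exact dvd_sub (dvd_trans (pow_dvd_pow _ n.le_succ) (hΨ n _ _ (hF n)))
      (dvd_trans (pow_dvd_pow _ n.le_succ) (hF (n + 1)))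
  refine ⟨F, hfix, fun G hG => sub_eq_zero.mp <|
    eq_zero_of_forall_X_pow_dvd (j := j) fun n => ?_⟩
  induction n with
  | zero => simp
  | succ n ih => simpa only [hG, hfix] using hΨ n _ _ ih

theorem existsUnique_add_X_mul_eq (j : σ) (A : MvPowerSeries σ R)
    {H : MvPowerSeries σ R → MvPowerSeries σ R} (hH : ∀ F G, F - G ∣ H F - H G) :
    ∃! F, A + X j * H F = F := by
  refine existsUnique_fixedPoint_of_contracting j fun n F G hFG => ?_
  rw [add_sub_add_left_eq_sub, ← mul_sub, pow_succ']
  exact mul_dvd_mul_left _ (hFG.trans (hH F G))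

/-- The part of `F` of `X j`-degree at least `n`, divided by `X j ^ n`. -/
noncomputable def divXPow (j : σ) (n : ℕ) : MvPowerSeries σ R →ₗ[R] MvPowerSeries σ R where
  toFun F e := coeff (e + Finsupp.single j n) F
  map_add' _ _ := rfl
  map_smul' _ _ := rfl

theorem coeff_divXPow (j : σ) (n : ℕ) (F : MvPowerSeries σ R) (e : σ →₀ ℕ) :
    coeff e (divXPow j n F) = coeff (e + Finsupp.single j n) F := rfl

theorem divXPow_X_pow_mul (j : σ) (n : ℕ) (F : MvPowerSeries σ R) :
    divXPow j n (X j ^ n * F) = F := by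
  ext e
  rw [coeff_divXPow, X_pow_eq, coeff_monomial_mul, if_pos le_add_self, one_mul,
    add_tsub_cancel_right]

theorem X_pow_dvd_divXPow {i j : σ} (hij : i ≠ j) (n : ℕ) {m : ℕ} {F : MvPowerSeries σ R}
    (hF : X i ^ m ∣ F) : X i ^ m ∣ divXPow j n F := by
  refine X_pow_dvd_iff.mpr fun e he => ?_
  rw [coeff_divXPow]
  exact X_pow_dvd_iff.mp hF _ (by simpa [Finsupp.single_apply, hij.symm] using he)

theorem divXPow_eq_zero_iff (j : σ) (n : ℕ) (F : MvPowerSeries σ R) :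
    divXPow j n F = 0 ↔ ∀ e : σ →₀ ℕ, n ≤ e j → coeff e F = 0 := by
  refine ⟨fun h e he => ?_, fun h => ext fun e => h _ (by simp)⟩
  have hle : Finsupp.single j n ≤ e := Finsupp.single_le_iff.mpr he
  rw [← tsub_add_cancel_of_le hle, ← coeff_divXPow, h, map_zero]

/-- The quotient is the fixed point of the `X i`-adic contraction
`Q ↦ divXPow j n (F - X i * B * Q)`. -/
theorem exists_eq_X_pow_add_X_mul_mul_add {i j : σ} (hij : i ≠ j) (n : ℕ)
    (B F : MvPowerSeries σ R) :
    ∃ Q r, F = (X j ^ n + X i * B) * Q + r ∧ ∀ e : σ →₀ ℕ, n ≤ e j → coeff e r = 0 := by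
  have hΨ : ∀ m Q Q', X i ^ m ∣ Q - Q' → X i ^ (m + 1) ∣
      divXPow j n (F - X i * B * Q) - divXPow j n (F - X i * B * Q') := by
    intro m Q Q' hQQ'
    rw [← map_sub, show F - X i * B * Q - (F - X i * B * Q') = X i * (B * (Q' - Q)) by ring]
    refine X_pow_dvd_divXPow hij n ?_
    rw [pow_succ']
    exact mul_dvd_mul_left _ (dvd_mul_of_dvd_right (dvd_sub_comm.mp hQQ') B)
  obtain ⟨Q, hQ, -⟩ := existsUnique_fixedPoint_of_contracting i hΨ
  refine ⟨Q, F - (X j ^ n + X i * B) * Q, by ring, ?_⟩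
  rw [← divXPow_eq_zero_iff,
    show F - (X j ^ n + X i * B) * Q = F - X i * B * Q - X j ^ n * Q by ring, map_sub,
    divXPow_X_pow_mul]
  exact sub_eq_zero.mpr hQ

instance {p : ℕ} [CharP R p] : CharP (MvPowerSeries σ R) p :=
  charP_of_injective_ringHom C_injective p

end MvPowerSeries

theorem Polynomial.sub_dvd_aeval_sub {R A : Type*} [CommRing R] [CommRing A] [Algebra R A]
    (P : Polynomial R) (a b : A) : a - b ∣ aeval a P - aeval b P := by
  simpa only [eval_map_algebraMap] using sub_dvd_eval_sub a b (P.map (algebraMap R A))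

theorem Polynomial.aeval_pow_map_frobenius {R A : Type*} [CommSemiring R] [CommSemiring A]
    [Algebra R A] (p : ℕ) [ExpChar R p] (P : Polynomial R) (a : A) :
    aeval (a ^ p) (P.map (frobenius R p)) = aeval a P ^ p := by
  rw [← expand_aeval, ← map_expand, map_frobenius_expand, map_pow]

open MvPowerSeries

section Cusp

variable (k : Type*) [CommRing k]

noncomputable def cuspParam : Fin 3 → MvPowerSeries (Fin 2) k := ![X 0, X 1 ^ 2, X 1 ^ 3]

theorem hasSubst_cuspParam : HasSubst (cuspParam k) :=
  hasSubst_of_constantCoeff_zero fun i => by fin_cases i <;> simp [cuspParam]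

noncomputable def cuspSubst : MvPowerSeries (Fin 3) k →ₐ[k] MvPowerSeries (Fin 2) k :=
  substAlgHom (hasSubst_cuspParam k)

variable {k}

theorem prod_pow_cuspParam (d : Fin 3 →₀ ℕ) :
    d.prod (fun i n => cuspParam k i ^ n) =
      monomial (Finsupp.single 0 (d 0) + Finsupp.single 1 (2 * d 1 + 3 * d 2)) 1 := by
  rw [Finsupp.prod_fintype _ _ fun _ => pow_zero _, Fin.prod_univ_three]
  change X 0 ^ d 0 * (X 1 ^ 2) ^ d 1 * (X 1 ^ 3) ^ d 2 = _
  rw [← pow_mul, ← pow_mul, mul_assoc, ← pow_add, X_pow_eq, X_pow_eq, monomial_mul_monomial,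
    mul_one]

theorem cuspSubst_X (i : Fin 3) : cuspSubst k (X i) = cuspParam k i :=
  substAlgHom_X _ i

theorem coeff_cuspSubst {F : MvPowerSeries (Fin 3) k}
    (hF : ∀ e : Fin 3 →₀ ℕ, 2 ≤ e 2 → coeff e F = 0) {d : Fin 3 →₀ ℕ} (hd : d 2 < 2) :
    coeff (Finsupp.single 0 (d 0) + Finsupp.single 1 (2 * d 1 + 3 * d 2)) (cuspSubst k F) =
      coeff d F := by
  classical
  rw [cuspSubst, substAlgHom_apply, coeff_subst (hasSubst_cuspParam k), finsum_eq_single _ d,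
    prod_pow_cuspParam, coeff_monomial_same, smul_eq_mul, mul_one]
  intro d' hd'
  by_cases h2 : 2 ≤ d' 2
  · rw [hF d' h2, zero_smul]
  rw [prod_pow_cuspParam, coeff_monomial, if_neg, smul_zero]
  intro h
  have h0 : d 0 = d' 0 := by simpa using congrArg (· 0) h
  have h1 : 2 * d 1 + 3 * d 2 = 2 * d' 1 + 3 * d' 2 := by simpa using congrArg (· 1) h
  exact hd' (Finsupp.ext fun i => by fin_cases i <;> simp <;> omega)

theorem eq_zero_of_cuspSubst_eq_zero {F : MvPowerSeries (Fin 3) k}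
    (hF : ∀ e : Fin 3 →₀ ℕ, 2 ≤ e 2 → coeff e F = 0) (h : cuspSubst k F = 0) : F = 0 := by
  ext d
  by_cases hd : 2 ≤ d 2
  · exact hF d hd
  · rw [← coeff_cuspSubst hF (not_le.mp hd), h, map_zero, map_zero]

theorem cuspSubst_X_one_pow_add_X_two_pow [CharP k 2] : cuspSubst k (X 1 ^ 3 + X 2 ^ 2) = 0 := by
  rw [map_add, map_pow, map_pow, cuspSubst_X, cuspSubst_X]
  change (X 1 ^ 2) ^ 3 + (X 1 ^ 3) ^ 2 = (0 : MvPowerSeries (Fin 2) k)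
  rw [← pow_mul, ← pow_mul]
  exact CharTwo.add_self_eq_zero _

theorem ker_cuspSubst [CharP k 2] :
    RingHom.ker (cuspSubst k) = Ideal.span {(X 1 : MvPowerSeries (Fin 3) k) ^ 3 + X 2 ^ 2} := by
  have hcusp := cuspSubst_X_one_pow_add_X_two_pow (k := k)
  refine le_antisymm (fun F hF => ?_) (Ideal.span_le.mpr (by simpa using hcusp))
  obtain ⟨Q, r, rfl, hr⟩ :=
    exists_eq_X_pow_add_X_mul_mul_add (by decide : (1 : Fin 3) ≠ 2) 2 (X 1 ^ 2) F
  have hD : (X 2 ^ 2 + X 1 * X 1 ^ 2 : MvPowerSeries (Fin 3) k) = X 1 ^ 3 + X 2 ^ 2 := by ring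
  have hr0 : r = 0 := by
    refine eq_zero_of_cuspSubst_eq_zero hr ?_
    rwa [RingHom.mem_ker, map_add, map_mul, hD, hcusp, zero_mul, zero_add] at hF
  rw [hr0, add_zero, Ideal.mem_span_singleton]
  exact Dvd.intro Q (by ring)

end Cusp

section Shear

variable {k : Type*} [CommRing k] (P : Polynomial k)

noncomputable def shearParam : Fin 2 → MvPowerSeries (Fin 2) k :=
  ![X 0 + X 1 * Polynomial.aeval (X 0) P, X 1]

theorem hasSubst_shearParam : HasSubst (shearParam P) :=
  hasSubst_of_constantCoeff_zero fun i => by fin_cases i <;> simp [shearParam]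

noncomputable def shearSubst : MvPowerSeries (Fin 2) k →ₐ[k] MvPowerSeries (Fin 2) k :=
  substAlgHom (hasSubst_shearParam P)

theorem shearSubst_X (i : Fin 2) : shearSubst P (X i) = shearParam P i :=
  substAlgHom_X _ i

/-- A left inverse substitutes for `s` the solution `t` of `t = s - m P(t)`. -/
theorem shearSubst_injective : Function.Injective (shearSubst P) := by
  obtain ⟨t, ht, -⟩ := existsUnique_add_X_mul_eq 1 (X 0 : MvPowerSeries (Fin 2) k)
    (H := fun F => -Polynomial.aeval F P) fun F G => by
      rw [neg_sub_neg]
      exact dvd_sub_comm.mp (Polynomial.sub_dvd_aeval_sub P F G)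
  have hb : HasSubst ![t, (X 1 : MvPowerSeries (Fin 2) k)] :=
    hasSubst_of_constantCoeff_zero fun i => by
      fin_cases i
      · rw [← ht]
        simp
      · simp
  refine Function.LeftInverse.injective (g := subst ![t, X 1]) fun f => ?_
  have hX : (fun i => subst ![t, X 1] (shearParam P i)) = X := by
    funext i
    fin_cases i
    · change subst _ (X 0 + X 1 * Polynomial.aeval (X 0) P) = X 0
      rw [← substAlgHom_apply hb, map_add, map_mul, ← Polynomial.aeval_algHom_apply,
        substAlgHom_X, substAlgHom_X]
      change t + X 1 * Polynomial.aeval t P = X 0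
      linear_combination -ht
    · simp [shearParam, subst_X hb]
  rw [shearSubst, substAlgHom_apply, subst_comp_subst_apply (hasSubst_shearParam P) hb, hX,
    subst_self, id]

end Shear

theorem mem_range_of_mul_mem_range {A B F : Type*} [Ring A] [Ring B] [FunLike F A B]
    [RingHomClass F A B] (f : F) {u : A} (hu : IsUnit u) {b : B} (h : b * f u ∈ Set.range f) :
    b ∈ Set.range f := by
  obtain ⟨v, rfl⟩ := hu
  obtain ⟨a, ha⟩ := h
  exact ⟨a * ↑v⁻¹, by rw [map_mul, ha, mul_assoc, ← map_mul, Units.mul_inv, map_one, mul_one]⟩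

section CuspShear

variable {k : Type*} [CommRing k] (P : Polynomial k)

noncomputable def cuspShear : MvPowerSeries (Fin 3) k →ₐ[k] MvPowerSeries (Fin 2) k :=
  (shearSubst P).comp (cuspSubst k)

theorem cuspShear_X_zero : cuspShear P (X 0) = X 0 + X 1 * Polynomial.aeval (X 0) P := by
  rw [cuspShear, AlgHom.comp_apply, cuspSubst_X]
  exact shearSubst_X P 0

theorem cuspShear_X_one : cuspShear P (X 1) = X 1 ^ 2 := by
  rw [cuspShear, AlgHom.comp_apply, cuspSubst_X]
  exact (map_pow _ _ _).trans (congrArg (· ^ 2) (shearSubst_X P 1))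

theorem cuspShear_X_two : cuspShear P (X 2) = X 1 ^ 3 := by
  rw [cuspShear, AlgHom.comp_apply, cuspSubst_X]
  exact (map_pow _ _ _).trans (congrArg (· ^ 3) (shearSubst_X P 1))

theorem ker_cuspShear [CharP k 2] :
    RingHom.ker (cuspShear P) = Ideal.span {(X 1 : MvPowerSeries (Fin 3) k) ^ 3 + X 2 ^ 2} :=
  (RingHom.ker_comp_of_injective (cuspSubst k).toRingHom (shearSubst_injective P)).trans
    ker_cuspSubst

/-- In characteristic 2, `s² = x² + m² P(s)²`, and `P(s)² = P'(s²)` for the Frobenius twist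
`P'` of `P`: so `s²` is the image of the solution of `T = X² + Y P'(T)`. -/
theorem exists_cuspShear_eq_X_zero_sq [CharP k 2] : ∃ T, cuspShear P T = X 0 ^ 2 := by
  set P' := P.map (frobenius k 2)
  obtain ⟨T, hT, -⟩ := existsUnique_add_X_mul_eq 1 (X 0 ^ 2 : MvPowerSeries (Fin 3) k)
    (H := fun F => Polynomial.aeval F P') (Polynomial.sub_dvd_aeval_sub P')
  obtain ⟨U, -, huniq⟩ := existsUnique_add_X_mul_eq 1 (cuspShear P (X 0) ^ 2)
    (H := fun F => X 1 * Polynomial.aeval F P') fun F G => by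
      rw [← mul_sub]
      exact Dvd.dvd.mul_left (Polynomial.sub_dvd_aeval_sub P' F G) _
  refine ⟨T, (huniq _ ?_).trans (huniq _ ?_).symm⟩
  · have hφT := congrArg (cuspShear P) hT
    rw [map_add, map_mul, map_pow, cuspShear_X_one, ← Polynomial.aeval_algHom_apply] at hφT
    linear_combination hφT
  · dsimp only
    rw [Polynomial.aeval_pow_map_frobenius, cuspShear_X_zero, CharTwo.add_sq, mul_pow]
    linear_combination (X 1 ^ 2 * Polynomial.aeval (X 0) P ^ 2) *
      (CharTwo.two_eq_zero : (2 : MvPowerSeries (Fin 2) k) = 0)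

/-- Writing `P(s) = E(s²) + s O(s²)`, the images `x, y, z` satisfy
`x y = m² s + z E(s²) + m³ s O(s²)` and `x z = m³ s + y² E(s²) + y O(s²) m² s`; this linear system
for `m² s, m³ s` has determinant `1 - y O(s²)²`, a unit. -/
theorem mem_range_cuspShear_of_eq_expand [CharP k 2] {E O : Polynomial k}
    (hP : P = Polynomial.expand k 2 E + Polynomial.X * Polynomial.expand k 2 O) :
    X 1 ^ 2 * X 0 ∈ Set.range (cuspShear P) ∧ X 1 ^ 3 * X 0 ∈ Set.range (cuspShear P) := by
  obtain ⟨T, hT⟩ := exists_cuspShear_eq_X_zero_sq P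
  have hE : cuspShear P (Polynomial.aeval T E) = Polynomial.aeval (X 0 ^ 2) E := by
    rw [← Polynomial.aeval_algHom_apply, hT]
  have hO : cuspShear P (Polynomial.aeval T O) = Polynomial.aeval (X 0 ^ 2) O := by
    rw [← Polynomial.aeval_algHom_apply, hT]
  have hx : cuspShear P (X 0) = X 0 + X 1 * (Polynomial.aeval (X 0 ^ 2) E +
      X 0 * Polynomial.aeval (X 0 ^ 2) O) := by
    rw [cuspShear_X_zero, hP]
    simp [Polynomial.expand_aeval]
  have hU : IsUnit (1 - X 1 * Polynomial.aeval T O ^ 2 : MvPowerSeries (Fin 3) k) := by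
    simp [isUnit_iff_constantCoeff]
  have hA : X 1 ^ 2 * X 0 * cuspShear P (1 - X 1 * Polynomial.aeval T O ^ 2) =
      cuspShear P (X 0 * X 1 - X 2 * Polynomial.aeval T E -
        Polynomial.aeval T O * (X 0 * X 2 - X 1 ^ 2 * Polynomial.aeval T E)) := by
    simp only [map_sub, map_mul, map_pow, map_one, hx, hE, hO, cuspShear_X_one, cuspShear_X_two]
    ring
  obtain ⟨A, hA⟩ := mem_range_of_mul_mem_range (cuspShear P) hU ⟨_, hA.symm⟩
  refine ⟨⟨A, hA⟩,
    X 0 * X 2 - X 1 ^ 2 * Polynomial.aeval T E - X 1 * Polynomial.aeval T O * A, ?_⟩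
  simp only [map_sub, map_mul, map_pow, hx, hE, hO, cuspShear_X_one, cuspShear_X_two]
  rw [show cuspShear P A = X 1 ^ 2 * X 0 from hA]
  ring

end CuspShear

open MvPowerSeries in
theorem stmt9_general (k : Type) [Field k] [CharP k 2] (α₀ α₁ α₂ α₃ : k) :
    letI s : MvPowerSeries (Fin 2) k := X 0
    letI m : MvPowerSeries (Fin 2) k := X 1
    letI x : MvPowerSeries (Fin 2) k :=
      s + m * (C (σ := Fin 2) (R := k) α₃ + C (σ := Fin 2) (R := k) α₂ * s + C (σ := Fin 2) (R := k) α₁ * s ^ 2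
        + C (σ := Fin 2) (R := k) α₀ * s ^ 3)
    letI y : MvPowerSeries (Fin 2) k := m ^ 2
    letI z : MvPowerSeries (Fin 2) k := m ^ 3
    ∃ φ : MvPowerSeries (Fin 3) k →+* MvPowerSeries (Fin 2) k,
      (∀ a : k, φ (C (σ := Fin 3) (R := k) a) = C (σ := Fin 2) (R := k) a) ∧
      φ (X 0) = x ∧ φ (X 1) = y ∧ φ (X 2) = z ∧
      RingHom.ker φ = Ideal.span {(X 1) ^ 3 + (X 2) ^ 2} ∧
      s ^ 2 ∈ Set.range φ ∧ m ^ 2 * s ∈ Set.range φ ∧ m ^ 3 * s ∈ Set.range φ := by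
  let P : Polynomial k := .C α₃ + .C α₂ * .X + .C α₁ * .X ^ 2 + .C α₀ * .X ^ 3
  have hP : P = Polynomial.expand k 2 (.C α₃ + .C α₁ * .X) +
      .X * Polynomial.expand k 2 (.C α₂ + .C α₀ * .X) := by
    simp only [P, map_add, map_mul, Polynomial.expand_C, Polynomial.expand_X]
    ring
  obtain ⟨hm2s, hm3s⟩ := mem_range_cuspShear_of_eq_expand P hP
  refine ⟨cuspShear P, (cuspShear P).commutes, ?_, cuspShear_X_one P, cuspShear_X_two P,
    ker_cuspShear P, exists_cuspShear_eq_X_zero_sq P, hm2s, hm3s⟩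
  rw [RingHom.coe_coe, cuspShear_X_zero]
  simp [P, MvPowerSeries.algebraMap_apply]

open MvPowerSeries in
/-- The complete local ring `k[[u⁻², u⁻¹+vu⁻⁴P, v²u⁻², v²u⁻³, v³u⁻³, v³u⁻⁴]]` is isomorphic to
`k[[x,y,z]]/(y³+z²)` via `x = u⁻¹+vu⁻⁴P`, `y = v²u⁻²`, `z = v³u⁻³`.  With `s = u⁻¹`,
`m = vu⁻¹`, this is expressed by a (substitution) homomorphism `φ : k[[X,Y,Z]] → k[[s,m]]`
with `φ(X) = x`, `φ(Y) = y`, `φ(Z) = z`, whose kernel is `(Y³+Z²)` and whose image contains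
all six generators. -/
theorem stmt9 (k : Type) [Field k] [CharP k 2] (α₀ α₁ α₂ α₃ : k) (hα₀ : α₀ ≠ 0) :
    letI s : MvPowerSeries (Fin 2) k := X 0
    letI m : MvPowerSeries (Fin 2) k := X 1
    letI x : MvPowerSeries (Fin 2) k :=
      s + m * (C (σ := Fin 2) (R := k) α₃ + C (σ := Fin 2) (R := k) α₂ * s + C (σ := Fin 2) (R := k) α₁ * s ^ 2
        + C (σ := Fin 2) (R := k) α₀ * s ^ 3)
    letI y : MvPowerSeries (Fin 2) k := m ^ 2
    letI z : MvPowerSeries (Fin 2) k := m ^ 3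
    ∃ φ : MvPowerSeries (Fin 3) k →+* MvPowerSeries (Fin 2) k,
      (∀ a : k, φ (C (σ := Fin 3) (R := k) a) = C (σ := Fin 2) (R := k) a) ∧
      φ (X 0) = x ∧ φ (X 1) = y ∧ φ (X 2) = z ∧
      RingHom.ker φ = Ideal.span {(X 1) ^ 3 + (X 2) ^ 2} ∧
      s ^ 2 ∈ Set.range φ ∧ m ^ 2 * s ∈ Set.range φ ∧ m ^ 3 * s ∈ Set.range φ :=
  stmt9_general k α₀ α₁ α₂ α₃
end

section
/- The module of Kähler differentials of R = k[a,b,e]/(P^4 e^2 + b^4 a + a^7) over k is generated by da, db, de subject to the single relation (b^4 + a^6)·da = 0; since b^4 + a^6 is a regular element of R, da generates the torsion submodule, and Ω¹_{R/k} modulo torsion is free of rank 2 with basis db, de. -/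
set_option synthInstance.maxHeartbeats 400000
set_option maxHeartbeats 1000000

open MvPolynomial

namespace St10

lemma aux_no_cube (k : Type) [Field k] (r : FractionRing (MvPolynomial (Fin 2) k))
    (h : r ^ 3 = -(algebraMap (MvPolynomial (Fin 2) k) _ ((X 0 : MvPolynomial (Fin 2) k) ^ 2))) :
    False := by
  set A := MvPolynomial (Fin 2) k
  obtain ⟨a, b, hb, rfl⟩ := IsFractionRing.div_surjective (A := A) r
  have hb0 : b ≠ 0 := nonZeroDivisors.ne_zero hb
  have hbK : (algebraMap A (FractionRing A)) b ≠ 0 := by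
    simpa using (IsFractionRing.to_map_eq_zero_iff (K := FractionRing A)).not.mpr hb0
  rw [div_pow, div_eq_iff (pow_ne_zero 3 hbK)] at h
  have key : a ^ 3 = -((X 0 : A) ^ 2 * b ^ 3) := by
    apply IsFractionRing.injective A (FractionRing A)
    push_cast [map_pow, map_neg, map_mul] at h ⊢
    rw [h]; ring
  have ha0 : a ≠ 0 := by
    intro h0
    rw [h0] at key
    have : (X 0 : A) ^ 2 * b ^ 3 = 0 := by
      have h' := key.symm
      rw [zero_pow (by norm_num : (3:ℕ) ≠ 0)] at h'
      exact neg_eq_zero.mp h'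
    rcases mul_eq_zero.mp this with h1 | h1
    · exact pow_ne_zero 2 (X_ne_zero 0) h1
    · exact pow_ne_zero 3 hb0 h1
  have keyF := congrArg (finSuccEquiv k 1) key
  rw [map_pow, map_neg, map_mul, map_pow, map_pow, finSuccEquiv_X_zero] at keyF
  set F := finSuccEquiv k 1
  have hFa : F a ≠ 0 := by simpa using (map_ne_zero_iff F F.injective).mpr ha0
  have hFb : F b ≠ 0 := by simpa using (map_ne_zero_iff F F.injective).mpr hb0
  have hdeg := congrArg Polynomial.natDegree keyF
  rw [Polynomial.natDegree_neg, Polynomial.natDegree_pow, Polynomial.natDegree_mul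
    (pow_ne_zero 2 Polynomial.X_ne_zero) (pow_ne_zero 3 hFb),
    Polynomial.natDegree_pow, Polynomial.natDegree_pow, Polynomial.natDegree_X] at hdeg
  omega

lemma aux_image (k : Type) [Field k] :
    (finSuccEquiv k 2) (X 1 ^ 2 + X 0 ^ 3 : MvPolynomial (Fin 3) k) =
      Polynomial.X ^ 3 + Polynomial.C ((X 0 : MvPolynomial (Fin 2) k) ^ 2) := by
  have h1 : (1 : Fin 3) = Fin.succ 0 := rfl
  rw [map_add, map_pow, map_pow, h1, finSuccEquiv_X_succ, finSuccEquiv_X_zero, map_pow]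
  ring

lemma aux_prime_p (k : Type) [Field k] :
    Prime (Polynomial.X ^ 3 + Polynomial.C ((X 0 : MvPolynomial (Fin 2) k) ^ 2)) := by
  set A := MvPolynomial (Fin 2) k
  set p : Polynomial A := Polynomial.X ^ 3 + Polynomial.C ((X 0 : A) ^ 2) with hp
  have hmonic : p.Monic := by
    exact Polynomial.monic_X_pow_add_C _ (by norm_num)
  have hirr : Irreducible p := by
    rw [hmonic.irreducible_iff_irreducible_map_fraction_map (K := FractionRing A)]
    have hmap : p.map (algebraMap A (FractionRing A)) =
        Polynomial.X ^ 3 + Polynomial.C (algebraMap A (FractionRing A) ((X 0 : A) ^ 2)) := by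
      rw [hp]; simp [Polynomial.map_add, Polynomial.map_pow]
    rw [hmap, Polynomial.irreducible_iff_roots_eq_zero_of_degree_le_three]
    · rw [Multiset.eq_zero_iff_forall_notMem]
      intro r hr
      rw [Polynomial.mem_roots (Polynomial.X_pow_add_C_ne_zero (by norm_num) _)] at hr
      have : r ^ 3 = -(algebraMap A (FractionRing A) ((X 0 : A) ^ 2)) := by
        have := hr
        simp only [Polynomial.IsRoot, Polynomial.eval_add, Polynomial.eval_pow,
          Polynomial.eval_X, Polynomial.eval_C] at this
        linear_combination this
      exact aux_no_cube k r this
    · rw [Polynomial.natDegree_X_pow_add_C]; norm_num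
    · rw [Polynomial.natDegree_X_pow_add_C]
  exact UniqueFactorizationMonoid.irreducible_iff_prime.mp hirr

lemma aux_prime_c0 (k : Type) [Field k] :
    Prime (X 1 ^ 2 + X 0 ^ 3 : MvPolynomial (Fin 3) k) := by
  rw [← MulEquiv.prime_iff (finSuccEquiv k 2).toRingEquiv.toMulEquiv]
  have : ((finSuccEquiv k 2).toRingEquiv.toMulEquiv : MvPolynomial (Fin 3) k →
      Polynomial (MvPolynomial (Fin 2) k)) (X 1 ^ 2 + X 0 ^ 3) =
      Polynomial.X ^ 3 + Polynomial.C ((X 0 : MvPolynomial (Fin 2) k) ^ 2) := aux_image k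
  rw [this]
  exact aux_prime_p k

variable (k : Type) [Field k] [CharP k 2] (α₀ α₁ α₂ α₃ : k)

/-- The defining polynomial. -/
noncomputable abbrev fp : MvPolynomial (Fin 3) k :=
  (C (α₃ ^ 2) * X 0 ^ 3 + C (α₂ ^ 2) * X 0 ^ 2 + C (α₁ ^ 2) * X 0 + C (α₀ ^ 2)) ^ 2 * X 2 ^ 2
    + X 1 ^ 4 * X 0 + X 0 ^ 7

noncomputable abbrev Ip : Ideal (MvPolynomial (Fin 3) k) := Ideal.span {fp k α₀ α₁ α₂ α₃}

noncomputable abbrev Rq := MvPolynomial (Fin 3) k ⧸ Ip k α₀ α₁ α₂ α₃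

noncomputable abbrev mkq : MvPolynomial (Fin 3) k →+* Rq k α₀ α₁ α₂ α₃ :=
  Ideal.Quotient.mk (Ip k α₀ α₁ α₂ α₃)

lemma h2S : (2 : MvPolynomial (Fin 3) k) = 0 := by
  have := CharP.cast_eq_zero (MvPolynomial (Fin 3) k) 2
  exact_mod_cast this

lemma hsq (i : Fin 3) (p : MvPolynomial (Fin 3) k) : pderiv i (p ^ 2) = 0 := by
  rw [pow_two, (pderiv i).leibniz]
  simp only [smul_eq_mul]
  linear_combination (p * pderiv i p) * h2S k

lemma hdf (i : Fin 3) : pderiv i (fp k α₀ α₁ α₂ α₃) =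
    (X 1 ^ 4 + X 0 ^ 6) * pderiv i (X 0) := by
  have hrw : fp k α₀ α₁ α₂ α₃ =
      ((C (α₃ ^ 2) * X 0 ^ 3 + C (α₂ ^ 2) * X 0 ^ 2 + C (α₁ ^ 2) * X 0 + C (α₀ ^ 2)) * X 2) ^ 2
        + ((X 1 ^ 2) ^ 2 * X 0 + (X 0 ^ 3) ^ 2 * X 0) := by unfold fp; ring
  rw [hrw, map_add, map_add, hsq, (pderiv i).leibniz, (pderiv i).leibniz, hsq, hsq]
  simp only [smul_eq_mul]
  ring

lemma heq_aeval : (aeval (R := k) fun i => mkq k α₀ α₁ α₂ α₃ (X i)) =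
    Ideal.Quotient.mkₐ k (Ip k α₀ α₁ α₂ α₃) := by
  apply MvPolynomial.algHom_ext
  intro i
  simp

lemma halg (p : MvPolynomial (Fin 3) k) :
    aeval (R := k) (fun i => mkq k α₀ α₁ α₂ α₃ (X i)) p = mkq k α₀ α₁ α₂ α₃ p :=
  AlgHom.congr_fun (heq_aeval k α₀ α₁ α₂ α₃) p

noncomputable def pres : Algebra.Presentation k (Rq k α₀ α₁ α₂ α₃) (Fin 3) Unit where
  toGenerators := Algebra.Generators.ofSurjective (fun i => mkq k α₀ α₁ α₂ α₃ (X i))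
    (by
      intro x
      obtain ⟨p, rfl⟩ := Ideal.Quotient.mk_surjective x
      exact ⟨p, halg k α₀ α₁ α₂ α₃ p⟩)
  relation _ := fp k α₀ α₁ α₂ α₃
  span_range_relation_eq_ker := by
    rw [Algebra.Generators.ker_eq_ker_aeval_val, Set.range_const]
    have : RingHom.ker (aeval (R := k) fun i => mkq k α₀ α₁ α₂ α₃ (X i)) =
        Ip k α₀ α₁ α₂ α₃ := by
      have h1 : (aeval (R := k) fun i => mkq k α₀ α₁ α₂ α₃ (X i)).toRingHom =
          Ideal.Quotient.mk (Ip k α₀ α₁ α₂ α₃) := by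
        rw [heq_aeval]; rfl
      show RingHom.ker (aeval (R := k) fun i => mkq k α₀ α₁ α₂ α₃ (X i)).toRingHom = _
      rw [h1, Ideal.mk_ker]
    exact this.symm ▸ rfl

lemma pres_val (i : Fin 3) : (pres k α₀ α₁ α₂ α₃).val i = mkq k α₀ α₁ α₂ α₃ (X i) := rfl

lemma pres_relation (r : Unit) : (pres k α₀ α₁ α₂ α₃).relation r = fp k α₀ α₁ α₂ α₃ := rfl

lemma hrel (r : Unit) : (pres k α₀ α₁ α₂ α₃).differentialsRelations.relation r =
    Finsupp.single (0 : Fin 3)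
      (mkq k α₀ α₁ α₂ α₃ (X 1) ^ 4 + mkq k α₀ α₁ α₂ α₃ (X 0) ^ 6) := by
  have key : ∀ i : Fin 3, (aeval (R := k) (pres k α₀ α₁ α₂ α₃).val)
      ((pderiv i) (fp k α₀ α₁ α₂ α₃)) =
      (Finsupp.single (0 : Fin 3)
        (mkq k α₀ α₁ α₂ α₃ (X 1) ^ 4 + mkq k α₀ α₁ α₂ α₃ (X 0) ^ 6)) i := by
    intro i
    rw [hdf]
    have hv : ((pres k α₀ α₁ α₂ α₃).val : Fin 3 → Rq k α₀ α₁ α₂ α₃) =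
        fun i => mkq k α₀ α₁ α₂ α₃ (X i) := rfl
    by_cases h0 : i = (0 : Fin 3)
    · subst h0
      rw [pderiv_X_self, mul_one, hv, Finsupp.single_eq_same]
      simp only [map_add, map_pow, aeval_X]
    · rw [pderiv_X_of_ne (Ne.symm h0), mul_zero, map_zero]
      rw [Finsupp.single_eq_of_ne' (Ne.symm h0)]
  ext i
  simp only [Algebra.Presentation.differentialsRelations, Finsupp.mapRange_apply,
    KaehlerDifferential.mvPolynomialBasis_repr_apply, Algebra.Generators.algebraMap_apply,
    pres_relation]
  erw [Finsupp.mapRange_apply, KaehlerDifferential.mvPolynomialBasis_repr_apply]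
  exact key i

lemma hnzd (hα₀ : α₀ ≠ 0) :
    (mkq k α₀ α₁ α₂ α₃ (X 1) ^ 4 + mkq k α₀ α₁ α₂ α₃ (X 0) ^ 6)
      ∈ nonZeroDivisors (Rq k α₀ α₁ α₂ α₃) := by
  set c0 : MvPolynomial (Fin 3) k := X 1 ^ 2 + X 0 ^ 3 with hc0def
  have hc0 : Prime c0 := aux_prime_c0 k
  have hcc : (X 1 ^ 4 + X 0 ^ 6 : MvPolynomial (Fin 3) k) = c0 ^ 2 := by
    rw [hc0def]; linear_combination (-(X 1 ^ 2 * X 0 ^ 3) : MvPolynomial (Fin 3) k) * h2S k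
  have hndvd : ¬ c0 ∣ fp k α₀ α₁ α₂ α₃ := by
    rintro ⟨h, hh⟩
    have hev := congrArg (aeval (R := k) (![0, 0, Polynomial.X] : Fin 3 → Polynomial k)) hh
    rw [map_mul] at hev
    have hc0ev : aeval (R := k) (![0, 0, Polynomial.X] : Fin 3 → Polynomial k) c0 = 0 := by
      rw [hc0def]; simp
    have hfpev : aeval (R := k) (![0, 0, Polynomial.X] : Fin 3 → Polynomial k) (fp k α₀ α₁ α₂ α₃) =
        Polynomial.C α₀ ^ 4 * Polynomial.X ^ 2 := by
      have e0 : (aeval (R := k) (![0, 0, Polynomial.X] : Fin 3 → Polynomial k)) (X (0 : Fin 3)) = 0 := by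
        simp
      have e1 : (aeval (R := k) (![0, 0, Polynomial.X] : Fin 3 → Polynomial k)) (X (1 : Fin 3)) = 0 := by
        simp
      have e2 : (aeval (R := k) (![0, 0, Polynomial.X] : Fin 3 → Polynomial k)) (X (2 : Fin 3)) =
          Polynomial.X := by simp
      unfold fp
      simp only [map_add, map_mul, map_pow, aeval_C, e0, e1, e2, Polynomial.algebraMap_eq]
      ring
    rw [hfpev, hc0ev, zero_mul] at hev
    have : (Polynomial.C α₀ ^ 4 : Polynomial k) * Polynomial.X ^ 2 ≠ 0 := by
      apply mul_ne_zero
      · exact pow_ne_zero 4 (by simpa using hα₀)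
      · exact pow_ne_zero 2 Polynomial.X_ne_zero
    exact this hev
  have hstep : ∀ g : MvPolynomial (Fin 3) k,
      fp k α₀ α₁ α₂ α₃ ∣ c0 * g → fp k α₀ α₁ α₂ α₃ ∣ g := by
    rintro g ⟨h, hh⟩
    have hdvd : c0 ∣ fp k α₀ α₁ α₂ α₃ * h := ⟨g, by linear_combination -hh⟩
    rcases hc0.2.2 _ _ hdvd with h1 | h1
    · exact absurd h1 hndvd
    · obtain ⟨h', rfl⟩ := h1
      refine ⟨h', ?_⟩
      apply mul_left_cancel₀ hc0.ne_zero
      rw [hh]; ring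
  rw [mem_nonZeroDivisors_iff_right]
  intro z hz
  obtain ⟨g, rfl⟩ := Ideal.Quotient.mk_surjective z
  have hmem : g * (X 1 ^ 4 + X 0 ^ 6) ∈ Ip k α₀ α₁ α₂ α₃ := by
    rw [← Ideal.Quotient.eq_zero_iff_mem]
    rw [map_mul, map_add, map_pow, map_pow]
    exact hz
  rw [Ideal.mem_span_singleton, hcc] at hmem
  have : fp k α₀ α₁ α₂ α₃ ∣ g := by
    apply hstep
    apply hstep
    obtain ⟨h, hh⟩ := hmem
    exact ⟨h, by linear_combination hh⟩
  rw [Ideal.Quotient.eq_zero_iff_mem]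
  exact Ideal.mem_span_singleton.mpr this

theorem main (hα₀ : α₀ ≠ 0) :

    Submodule.span (Rq k α₀ α₁ α₂ α₃)
      {KaehlerDifferential.D k _ (mkq k α₀ α₁ α₂ α₃ (X 0)),
       KaehlerDifferential.D k _ (mkq k α₀ α₁ α₂ α₃ (X 1)),
       KaehlerDifferential.D k _ (mkq k α₀ α₁ α₂ α₃ (X 2))} = ⊤ ∧
    (mkq k α₀ α₁ α₂ α₃ (X 1) ^ 4 + mkq k α₀ α₁ α₂ α₃ (X 0) ^ 6) •
      KaehlerDifferential.D k _ (mkq k α₀ α₁ α₂ α₃ (X 0)) = 0 ∧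
    (mkq k α₀ α₁ α₂ α₃ (X 1) ^ 4 + mkq k α₀ α₁ α₂ α₃ (X 0) ^ 6)
      ∈ nonZeroDivisors (Rq k α₀ α₁ α₂ α₃) ∧
    Submodule.torsion (Rq k α₀ α₁ α₂ α₃) (Ω[Rq k α₀ α₁ α₂ α₃⁄k]) =
      Submodule.span _ {KaehlerDifferential.D k _ (mkq k α₀ α₁ α₂ α₃ (X 0))} ∧
    Submodule.span (Rq k α₀ α₁ α₂ α₃)
      {(Submodule.torsion (Rq k α₀ α₁ α₂ α₃) (Ω[Rq k α₀ α₁ α₂ α₃⁄k])).mkQ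
         (KaehlerDifferential.D k _ (mkq k α₀ α₁ α₂ α₃ (X 1))),
       (Submodule.torsion (Rq k α₀ α₁ α₂ α₃) (Ω[Rq k α₀ α₁ α₂ α₃⁄k])).mkQ
         (KaehlerDifferential.D k _ (mkq k α₀ α₁ α₂ α₃ (X 2)))} = ⊤ ∧
    LinearIndependent (Rq k α₀ α₁ α₂ α₃)
      ![(Submodule.torsion (Rq k α₀ α₁ α₂ α₃) (Ω[Rq k α₀ α₁ α₂ α₃⁄k])).mkQ
         (KaehlerDifferential.D k _ (mkq k α₀ α₁ α₂ α₃ (X 1))),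
        (Submodule.torsion (Rq k α₀ α₁ α₂ α₃) (Ω[Rq k α₀ α₁ α₂ α₃⁄k])).mkQ
         (KaehlerDifferential.D k _ (mkq k α₀ α₁ α₂ α₃ (X 2)))] := by
  classical
  have hip := (pres k α₀ α₁ α₂ α₃).differentialsSolution_isPresentation
  rw [Module.Relations.Solution.isPresentation_iff] at hip
  obtain ⟨hspan, hker⟩ := hip
  have hπ_single : ∀ (i : Fin 3) (x : Rq k α₀ α₁ α₂ α₃),
      (pres k α₀ α₁ α₂ α₃).differentialsSolution.π (Finsupp.single i x) =
        x • (pres k α₀ α₁ α₂ α₃).differentialsSolution.var i := by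
    intro i x
    show Finsupp.linearCombination _ (pres k α₀ α₁ α₂ α₃).differentialsSolution.var
      (Finsupp.single i x) = _
    erw [Finsupp.linearCombination_single]
  have hkerπ : LinearMap.ker (pres k α₀ α₁ α₂ α₃).differentialsSolution.π =
      Submodule.span (Rq k α₀ α₁ α₂ α₃) {Finsupp.single (0 : Fin 3)
        (mkq k α₀ α₁ α₂ α₃ (X 1) ^ 4 + mkq k α₀ α₁ α₂ α₃ (X 0) ^ 6)} := by
    rw [hker]
    congr 1
    ext y
    constructor
    · rintro ⟨r, rfl⟩
      erw [hrel]
      exact Set.mem_singleton _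
    · intro hy
      erw [Set.mem_singleton_iff] at hy
      exact ⟨(), by erw [hrel]; exact hy.symm⟩
  -- Fin-3-typed copies
  let V : Fin 3 → (Ω[Rq k α₀ α₁ α₂ α₃⁄k]) := (pres k α₀ α₁ α₂ α₃).differentialsSolution.var
  let π3 : ((Fin 3) →₀ Rq k α₀ α₁ α₂ α₃) →ₗ[Rq k α₀ α₁ α₂ α₃] (Ω[Rq k α₀ α₁ α₂ α₃⁄k]) :=
    (pres k α₀ α₁ α₂ α₃).differentialsSolution.π
  have hspan3 : Submodule.span (Rq k α₀ α₁ α₂ α₃) (Set.range V) = ⊤ := hspan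
  have hsurj3 : Function.Surjective π3 := by
    have : Function.Surjective (pres k α₀ α₁ α₂ α₃).differentialsSolution.π := by
      rw [Module.Relations.Solution.surjective_π_iff_span_eq_top]; exact hspan
    exact this
  have hker3 : LinearMap.ker π3 = Submodule.span (Rq k α₀ α₁ α₂ α₃)
      {Finsupp.single (0 : Fin 3)
        (mkq k α₀ α₁ α₂ α₃ (X 1) ^ 4 + mkq k α₀ α₁ α₂ α₃ (X 0) ^ 6)} := hkerπ
  have hsingle3 : ∀ (i : Fin 3) (x : Rq k α₀ α₁ α₂ α₃),
      π3 (Finsupp.single i x) = x • V i := hπ_single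
  have hV : ∀ i : Fin 3, V i =
      KaehlerDifferential.D k (Rq k α₀ α₁ α₂ α₃) (mkq k α₀ α₁ α₂ α₃ (X i)) := fun _ => rfl
  have fin3cases : ∀ j : Fin 3, j = 0 ∨ j = 1 ∨ j = 2 := by decide
  have fin2cases : ∀ j : Fin 2, j = 0 ∨ j = 1 := by decide
  have hvarr : Set.range V =
      {KaehlerDifferential.D k (Rq k α₀ α₁ α₂ α₃) (mkq k α₀ α₁ α₂ α₃ (X 0)),
       KaehlerDifferential.D k (Rq k α₀ α₁ α₂ α₃) (mkq k α₀ α₁ α₂ α₃ (X 1)),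
       KaehlerDifferential.D k (Rq k α₀ α₁ α₂ α₃) (mkq k α₀ α₁ α₂ α₃ (X 2))} := by
    ext x
    simp only [Set.mem_range, Set.mem_insert_iff, Set.mem_singleton_iff]
    constructor
    · rintro ⟨i, rfl⟩
      rcases fin3cases i with rfl | rfl | rfl
      · exact Or.inl (hV 0)
      · exact Or.inr (Or.inl (hV 1))
      · exact Or.inr (Or.inr (hV 2))
    · rintro (rfl | rfl | rfl)
      exacts [⟨0, (hV 0).symm⟩, ⟨1, (hV 1).symm⟩, ⟨2, (hV 2).symm⟩]
  have c1 : Submodule.span (Rq k α₀ α₁ α₂ α₃)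
      {KaehlerDifferential.D k (Rq k α₀ α₁ α₂ α₃) (mkq k α₀ α₁ α₂ α₃ (X 0)),
       KaehlerDifferential.D k (Rq k α₀ α₁ α₂ α₃) (mkq k α₀ α₁ α₂ α₃ (X 1)),
       KaehlerDifferential.D k (Rq k α₀ α₁ α₂ α₃) (mkq k α₀ α₁ α₂ α₃ (X 2))} = ⊤ := by
    rw [← hvarr]; exact hspan3
  have c2 : (mkq k α₀ α₁ α₂ α₃ (X 1) ^ 4 + mkq k α₀ α₁ α₂ α₃ (X 0) ^ 6) •
      KaehlerDifferential.D k (Rq k α₀ α₁ α₂ α₃) (mkq k α₀ α₁ α₂ α₃ (X 0)) = 0 := by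
    have h0 := (pres k α₀ α₁ α₂ α₃).differentialsSolution.π_relation ()
    erw [hrel, hπ_single] at h0
    exact h0
  have c3 := hnzd k α₀ α₁ α₂ α₃ hα₀
  have c4 : Submodule.torsion (Rq k α₀ α₁ α₂ α₃) (Ω[Rq k α₀ α₁ α₂ α₃⁄k]) =
      Submodule.span (Rq k α₀ α₁ α₂ α₃)
        {KaehlerDifferential.D k (Rq k α₀ α₁ α₂ α₃) (mkq k α₀ α₁ α₂ α₃ (X 0))} := by
    apply le_antisymm
    · intro x hx
      obtain ⟨r, hr⟩ := (Submodule.mem_torsion_iff x).mp hx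
      obtain ⟨v, rfl⟩ := hsurj3 x
      have hm : (r : Rq k α₀ α₁ α₂ α₃) • v ∈ LinearMap.ker π3 := by
        rw [LinearMap.mem_ker, map_smul]
        rw [Submonoid.smul_def] at hr
        exact hr
      rw [hker3, Submodule.mem_span_singleton] at hm
      obtain ⟨s, hs⟩ := hm
      have hcoord : ∀ i : Fin 3, i ≠ 0 → v i = 0 := by
        intro i hi
        have h1 := congrArg (fun w : (Fin 3) →₀ Rq k α₀ α₁ α₂ α₃ => w i) hs
        simp only [Finsupp.smul_apply, Finsupp.single_eq_of_ne' (Ne.symm hi), smul_zero,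
          smul_eq_mul, mul_zero] at h1
        exact (mem_nonZeroDivisors_iff_right.mp r.2) _ (by rw [mul_comm]; exact h1.symm)
      have hv : v = Finsupp.single (0 : Fin 3) (v 0) := by
        ext i
        by_cases h0 : i = 0
        · subst h0; rw [Finsupp.single_eq_same]
        · rw [Finsupp.single_eq_of_ne' (Ne.symm h0)]
          exact hcoord i h0
      rw [hv, hsingle3, hV]
      exact Submodule.mem_span_singleton.mpr ⟨v 0, rfl⟩
    · rw [Submodule.span_le, Set.singleton_subset_iff]
      exact (Submodule.mem_torsion_iff _).mpr
        ⟨⟨_, c3⟩, by rw [Submonoid.smul_def]; exact c2⟩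
  refine ⟨c1, c2, c3, c4, ?_, ?_⟩
  · -- claim 5
    have hDaT : KaehlerDifferential.D k (Rq k α₀ α₁ α₂ α₃) (mkq k α₀ α₁ α₂ α₃ (X 0)) ∈
        Submodule.torsion (Rq k α₀ α₁ α₂ α₃) (Ω[Rq k α₀ α₁ α₂ α₃⁄k]) := by
      rw [c4]; exact Submodule.mem_span_singleton_self _
    have hmk0 : (Submodule.torsion (Rq k α₀ α₁ α₂ α₃) (Ω[Rq k α₀ α₁ α₂ α₃⁄k])).mkQ
        (KaehlerDifferential.D k (Rq k α₀ α₁ α₂ α₃) (mkq k α₀ α₁ α₂ α₃ (X 0))) = 0 := by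
      rwa [Submodule.mkQ_apply, Submodule.Quotient.mk_eq_zero]
    have himg := congrArg (Submodule.map
      (Submodule.torsion (Rq k α₀ α₁ α₂ α₃) (Ω[Rq k α₀ α₁ α₂ α₃⁄k])).mkQ) c1
    rw [Submodule.map_span, Submodule.map_top, Submodule.range_mkQ,
      Set.image_insert_eq, Set.image_insert_eq, Set.image_singleton, hmk0,
      Submodule.span_insert_zero] at himg
    exact himg
  · -- claim 6
    rw [Fintype.linearIndependent_iff]
    intro g hg
    rw [Fin.sum_univ_two] at hg
    simp only [Matrix.cons_val_zero, Matrix.cons_val_one, Matrix.head_cons] at hg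
    have hmem : g 0 • KaehlerDifferential.D k (Rq k α₀ α₁ α₂ α₃) (mkq k α₀ α₁ α₂ α₃ (X 1)) +
        g 1 • KaehlerDifferential.D k (Rq k α₀ α₁ α₂ α₃) (mkq k α₀ α₁ α₂ α₃ (X 2)) ∈
        Submodule.torsion (Rq k α₀ α₁ α₂ α₃) (Ω[Rq k α₀ α₁ α₂ α₃⁄k]) := by
      rw [← Submodule.Quotient.mk_eq_zero, ← Submodule.mkQ_apply, map_add, map_smul, map_smul]
      exact hg
    rw [c4, Submodule.mem_span_singleton] at hmem
    obtain ⟨s, hs⟩ := hmem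
    have hw : π3 (Finsupp.single (1 : Fin 3) (g 0) + Finsupp.single (2 : Fin 3) (g 1) -
        Finsupp.single (0 : Fin 3) s) = 0 := by
      rw [map_sub, map_add, hsingle3, hsingle3, hsingle3, sub_eq_zero, hV, hV, hV]
      exact hs.symm
    have hwk : Finsupp.single (1 : Fin 3) (g 0) + Finsupp.single (2 : Fin 3) (g 1) -
        Finsupp.single (0 : Fin 3) s ∈ LinearMap.ker π3 := hw
    rw [hker3, Submodule.mem_span_singleton] at hwk
    obtain ⟨t, ht⟩ := hwk
    have hg0 : g 0 = 0 := by
      have h1 := congrArg (fun w : (Fin 3) →₀ Rq k α₀ α₁ α₂ α₃ => w (1 : Fin 3)) ht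
      simp only [Finsupp.smul_apply, Finsupp.sub_apply, Finsupp.add_apply,
        Finsupp.single_eq_same, Finsupp.single_eq_of_ne' (show (0:Fin 3) ≠ 1 by decide),
        Finsupp.single_eq_of_ne' (show (2:Fin 3) ≠ 1 by decide), smul_zero, sub_zero,
        add_zero, zero_add] at h1
      exact h1.symm
    have hg1 : g 1 = 0 := by
      have h1 := congrArg (fun w : (Fin 3) →₀ Rq k α₀ α₁ α₂ α₃ => w (2 : Fin 3)) ht
      simp only [Finsupp.smul_apply, Finsupp.sub_apply, Finsupp.add_apply,
        Finsupp.single_eq_same, Finsupp.single_eq_of_ne' (show (0:Fin 3) ≠ 2 by decide),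
        Finsupp.single_eq_of_ne' (show (1:Fin 3) ≠ 2 by decide), smul_zero, sub_zero,
        add_zero, zero_add] at h1
      exact h1.symm
    intro i
    rcases fin2cases i with rfl | rfl
    · exact hg0
    · exact hg1

end St10

set_option synthInstance.maxHeartbeats 400000
set_option maxHeartbeats 1000000

open MvPolynomial in
/-- For `R = k[a,b,e]/(P⁴e² + b⁴a + a⁷)`, the module `Ω¹_{R/k}` is generated by `da, db, de`;
`(b⁴+a⁶)·da = 0`, `b⁴+a⁶` is a regular element, `da` generates the torsion submodule, and
`Ω¹_{R/k}` modulo torsion is free of rank two with basis `db, de`. -/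
theorem stmt10 (k : Type) [Field k] [CharP k 2] (α₀ α₁ α₂ α₃ : k) (hα₀ : α₀ ≠ 0) :
    letI S := MvPolynomial (Fin 3) k
    letI P4 : S := (C (α₃ ^ 2) * X 0 ^ 3 + C (α₂ ^ 2) * X 0 ^ 2 + C (α₁ ^ 2) * X 0
      + C (α₀ ^ 2)) ^ 2
    letI I : Ideal S := Ideal.span {P4 * X 2 ^ 2 + X 1 ^ 4 * X 0 + X 0 ^ 7}
    letI R := S ⧸ I
    letI a : R := Ideal.Quotient.mk I (X 0)
    letI b : R := Ideal.Quotient.mk I (X 1)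
    letI e : R := Ideal.Quotient.mk I (X 2)
    letI D := KaehlerDifferential.D k R
    letI T := Submodule.torsion R (Ω[R⁄k])
    Submodule.span R {D a, D b, D e} = ⊤ ∧
    (b ^ 4 + a ^ 6) • D a = 0 ∧
    (b ^ 4 + a ^ 6) ∈ nonZeroDivisors R ∧
    T = Submodule.span R {D a} ∧
    Submodule.span R {T.mkQ (D b), T.mkQ (D e)} = ⊤ ∧
    LinearIndependent R ![T.mkQ (D b), T.mkQ (D e)] := by
  exact St10.main k α₀ α₁ α₂ α₃ hα₀
end

section
/- The pullback of the dualizing sheaf of Y to the normalization X = P^2 is ν*(ω_Y) ≅ O_X(-1); in particular deg(ω_Y) = -1 and ω_Y^∨ is ample, so Y is a del Pezzo surface. -/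
set_option synthInstance.maxHeartbeats 1000000
set_option maxHeartbeats 1000000
set_option maxHeartbeats 1000000
set_option synthInstance.maxHeartbeats 1000000
set_option linter.unusedSectionVars false
open MvPolynomial

variable {k : Type} [Field k]

local notation "R" => MvPolynomial (Fin 2) k


/-- parity support predicate -/
def Pe (h : MvPolynomial (Fin 2) k) : Prop :=
  ∀ m, coeff m h ≠ 0 → ∃ n, m = Finsupp.single 0 (2*n)

lemma fin2_single (m : Fin 2 →₀ ℕ) (h : m 1 = 0) : m = Finsupp.single 0 (m 0) := by
  ext i
  fin_cases i
  · simp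
  · simpa using h

lemma pe_of_mem {h : R} (hh : h ∈ Algebra.adjoin k {(X 0 : R)^2}) : Pe h := by
  induction hh using Algebra.adjoin_induction with
  | mem x hx =>
    rcases Set.mem_singleton_iff.1 hx with rfl
    intro m hm
    rw [X_pow_eq_monomial, coeff_monomial] at hm
    refine ⟨1, ?_⟩
    by_contra hne
    rw [if_neg, ] at hm
    · exact hm rfl
    · intro he; exact hne (by rw [← he])
  | algebraMap a =>
    intro m hm
    rw [MvPolynomial.algebraMap_eq, coeff_C] at hm
    refine ⟨0, ?_⟩
    by_contra hne
    rw [if_neg] at hm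
    · exact hm rfl
    · intro he; apply hne; rw [← he]; simp
  | add x y hx hy px py =>
    intro m hm
    rw [coeff_add] at hm
    rcases (by by_contra hc; push_neg at hc; rw [hc.1, hc.2, add_zero] at hm; exact hm rfl :
      coeff m x ≠ 0 ∨ coeff m y ≠ 0) with h' | h'
    · exact px m h'
    · exact py m h'
  | mul x y hx hy px py =>
    intro m hm
    rw [coeff_mul] at hm
    obtain ⟨⟨a, b⟩, hab, hne⟩ := Finset.exists_ne_zero_of_sum_ne_zero hm
    obtain ⟨n1, rfl⟩ := px a (fun h0 => hne (by simp [h0]))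
    obtain ⟨n2, rfl⟩ := py b (fun h0 => hne (by simp [h0]))
    refine ⟨n1 + n2, ?_⟩
    rw [← Finset.HasAntidiagonal.mem_antidiagonal.1 hab, ← Finsupp.single_add]
    ring_nf

lemma coeff_X1_pow_mul {j : ℕ} {r : R} {m : Fin 2 →₀ ℕ} (h : m 1 < j) :
    coeff m (X 1 ^ j * r) = 0 := by
  rw [mul_comm, X_pow_eq_monomial, coeff_mul_monomial']
  rw [if_neg]
  intro hle
  exact absurd (by simpa using hle 1) (Nat.not_le.2 h)

lemma pe_mul_pow {g : R} (hg : Pe g) (d : ℕ) :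
    ∀ m, coeff m (g * X 0 ^ d) ≠ 0 → ∃ n, m = Finsupp.single 0 (2*n + d) := by
  intro m hm
  rw [X_pow_eq_monomial, coeff_mul_monomial'] at hm
  by_cases hle : (Finsupp.single (0 : Fin 2) d) ≤ m
  · rw [if_pos hle, mul_one] at hm
    obtain ⟨n, hn⟩ := hg _ hm
    refine ⟨n, ?_⟩
    have hm2 : m = Finsupp.single 0 (2*n) + Finsupp.single 0 d := by
      rw [← hn, tsub_add_cancel_of_le hle]
    rw [hm2, ← Finsupp.single_add]
  · rw [if_neg hle] at hm; exact absurd rfl hm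

lemma single_inj0 {a b : ℕ} (h : Finsupp.single (0 : Fin 2) a = Finsupp.single 0 b) : a = b := by
  have := congrArg (fun f => f 0) h
  simpa using this


def Gset (k : Type) [Field k] (c : ℕ) (F : MvPolynomial (Fin 2) k) : Set (MvPolynomial (Fin 2) k) :=
  {X 0 ^ 2, X 0 ^ c + X 1 * F, X 1 ^ 2, X 1 ^ 2 * X 0, X 1 ^ 3, X 1 ^ 3 * X 0}

variable [CharP k 2]

lemma two_eq_zero_R : (2 : R) = 0 := by
  have : ((2:ℕ) : R) = 0 := CharP.cast_eq_zero R 2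
  simpa using this

lemma mem_struct {c : ℕ} {F q : R} (hq : q ∈ Algebra.adjoin k (Gset k c F)) :
    ∃ f g r : R, f ∈ Algebra.adjoin k {(X 0 : R)^2} ∧ g ∈ Algebra.adjoin k {(X 0 : R)^2} ∧
      q = f + g * (X 0 ^ c + X 1 * F) + X 1 ^ 2 * r := by
  set E := Algebra.adjoin k {(X 0 : R)^2} with hE
  induction hq using Algebra.adjoin_induction with
  | mem x hx =>
    have h1 : (X 0 : R)^2 ∈ E := Algebra.subset_adjoin rfl
    rcases hx with rfl | rfl | rfl | rfl | rfl | rfl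
    · exact ⟨X 0 ^ 2, 0, 0, h1, zero_mem _, by ring⟩
    · exact ⟨0, 1, 0, zero_mem _, one_mem _, by ring⟩
    · exact ⟨0, 0, 1, zero_mem _, zero_mem _, by ring⟩
    · exact ⟨0, 0, X 0, zero_mem _, zero_mem _, by ring⟩
    · exact ⟨0, 0, X 1, zero_mem _, zero_mem _, by ring⟩
    · exact ⟨0, 0, X 1 * X 0, zero_mem _, zero_mem _, by ring⟩
  | algebraMap a =>
    exact ⟨algebraMap k _ a, 0, 0, Subalgebra.algebraMap_mem _ _, zero_mem _, by ring⟩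
  | add x y hx hy px py =>
    obtain ⟨f1, g1, r1, hf1, hg1, rfl⟩ := px
    obtain ⟨f2, g2, r2, hf2, hg2, rfl⟩ := py
    exact ⟨f1 + f2, g1 + g2, r1 + r2, add_mem hf1 hf2, add_mem hg1 hg2, by ring⟩
  | mul x y hx hy px py =>
    obtain ⟨f1, g1, r1, hf1, hg1, rfl⟩ := px
    obtain ⟨f2, g2, r2, hf2, hg2, rfl⟩ := py
    have hX2c : ((X 0 : R) ^ 2) ^ c ∈ E := pow_mem (Algebra.subset_adjoin (Set.mem_singleton _)) c
    refine ⟨f1 * f2 + g1 * g2 * (X 0 ^ 2) ^ c, f1 * g2 + g1 * f2,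
      r1 * f2 + r1 * g2 * (X 0 ^ c + X 1 * F) + f1 * r2 + g1 * (X 0 ^ c + X 1 * F) * r2
        + X 1 ^ 2 * r1 * r2 + g1 * g2 * F ^ 2,
      add_mem (mul_mem hf1 hf2) (mul_mem (mul_mem hg1 hg2) hX2c),
      add_mem (mul_mem hf1 hg2) (mul_mem hg1 hf2), ?_⟩
    have h2 : (2 : R) = 0 := two_eq_zero_R
    linear_combination (g1 * g2 * X 0 ^ c * X 1 * F) * h2

lemma mono_mem {c : ℕ} {F : R} (a b : ℕ) :
    (X 0 : R) ^ a * X 1 ^ (b + 2) ∈ Algebra.adjoin k (Gset k c F) := by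
  set A' := Algebra.adjoin k (Gset k c F) with hA
  have h0 : (X 0 : R) ^ 2 ∈ A' := Algebra.subset_adjoin (by left; rfl)
  have h2 : (X 1 : R) ^ 2 ∈ A' := Algebra.subset_adjoin (by right; right; left; rfl)
  have h3 : (X 1 : R) ^ 2 * X 0 ∈ A' := Algebra.subset_adjoin (by right; right; right; left; rfl)
  have h4 : (X 1 : R) ^ 3 ∈ A' := Algebra.subset_adjoin (by right; right; right; right; left; rfl)
  have h5 : (X 1 : R) ^ 3 * X 0 ∈ A' :=
    Algebra.subset_adjoin (by right; right; right; right; right; rfl)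
  rcases Nat.even_or_odd a with ⟨a', rfl⟩ | ⟨a', rfl⟩ <;>
    rcases Nat.even_or_odd b with ⟨b', rfl⟩ | ⟨b', rfl⟩
  · have : (X 0 : R) ^ (a' + a') * X 1 ^ (b' + b' + 2) = (X 0 ^ 2)^a' * ((X 1 ^2)^b' * X 1 ^ 2) := by
      ring
    rw [this]
    exact mul_mem (pow_mem h0 a') (mul_mem (pow_mem h2 b') h2)
  · have : (X 0 : R) ^ (a' + a') * X 1 ^ (2*b' + 1 + 2) = (X 0 ^ 2)^a' * ((X 1 ^2)^b' * X 1 ^ 3) := by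
      ring
    rw [this]
    exact mul_mem (pow_mem h0 a') (mul_mem (pow_mem h2 b') h4)
  · have : (X 0 : R) ^ (2*a'+1) * X 1 ^ (b' + b' + 2) =
        (X 0 ^ 2)^a' * ((X 1 ^2)^b' * (X 1 ^ 2 * X 0)) := by ring
    rw [this]
    exact mul_mem (pow_mem h0 a') (mul_mem (pow_mem h2 b') h3)
  · have : (X 0 : R) ^ (2*a'+1) * X 1 ^ (2*b' + 1 + 2) =
        (X 0 ^ 2)^a' * ((X 1 ^2)^b' * (X 1 ^ 3 * X 0)) := by ring
    rw [this]
    exact mul_mem (pow_mem h0 a') (mul_mem (pow_mem h2 b') h5)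

lemma easy_dir {c : ℕ} {F : R} (s : R) : (X 1 : R) ^ 2 * s ∈ Algebra.adjoin k (Gset k c F) := by
  induction s using MvPolynomial.induction_on' with
  | monomial m a =>
    have hmono : (monomial m) a = C a * (X 0 ^ (m 0) * X 1 ^ (m 1)) := by
      rw [monomial_eq, Finsupp.prod_fintype _ _ (fun i => pow_zero _), Fin.prod_univ_two]
    have : (X 1 : R) ^ 2 * (monomial m) a = C a * (X 0 ^ (m 0) * X 1 ^ (m 1 + 2)) := by
      rw [hmono]; ring
    rw [this]
    refine mul_mem ?_ (mono_mem _ _)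
    rw [← MvPolynomial.algebraMap_eq]
    exact Subalgebra.algebraMap_mem _ _
  | add p q hp hq =>
    rw [mul_add]
    exact add_mem hp hq

lemma pe_coeff_zero {f : R} (hf : Pe f) {m : Fin 2 →₀ ℕ} (h : m 1 ≠ 0) : coeff m f = 0 := by
  by_contra hc
  obtain ⟨n, rfl⟩ := hf m hc
  exact h (by simp)

lemma hard_dir {c : ℕ} {F q : R} (hc : Odd c)
    (hq : q ∈ Algebra.adjoin k (Gset k c F)) (hq1 : q * X 1 ∈ Algebra.adjoin k (Gset k c F)) :
    ∃ r, q = X 1 ^ 2 * r := by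
  obtain ⟨f', g', r', hf', hg', hrep'⟩ := mem_struct hq1
  have pf' : Pe f' := pe_of_mem hf'
  have pg' : Pe g' := pe_of_mem hg'
  -- step A0 : layer-0 coefficients of q * X 1 vanish, giving info on f', g'
  have expand : ∀ m : Fin 2 →₀ ℕ, m 1 = 0 →
      coeff m f' + coeff m (g' * X 0 ^ c) = 0 := by
    intro m hm
    have h1 : coeff m (q * X 1) = 0 := by
      rw [mul_comm, ← pow_one (X 1 : R)]
      exact coeff_X1_pow_mul (by omega)
    rw [hrep'] at h1
    have hW : g' * (X 0 ^ c + X 1 * F) = g' * X 0 ^ c + X 1 ^ 1 * (g' * F) := by ring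
    rw [coeff_add, coeff_add, hW, coeff_add, coeff_X1_pow_mul (by omega),
      coeff_X1_pow_mul (by omega), add_zero, add_zero] at h1
    exact h1
  -- both summands vanish separately, by parity
  have hterm : ∀ m : Fin 2 →₀ ℕ, m 1 = 0 → coeff m (g' * X 0 ^ c) = 0 := by
    intro m hm
    have hsum := expand m hm
    rcases Nat.even_or_odd (m 0) with he | ho
    · -- even : the g'-term must vanish by parity
      by_contra hne
      obtain ⟨n, hn⟩ := pe_mul_pow pg' c m hne
      have : m 0 = 2*n + c := by
        have := congrArg (fun f => f (0:Fin 2)) hn; simpa using this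
      rw [this] at he
      rcases hc with ⟨c', rfl⟩
      rcases he with ⟨e, he⟩
      omega
    · -- odd : the f'-term vanishes, so g'-term does too
      have hfm : coeff m f' = 0 := by
        by_contra hne
        obtain ⟨n, hn⟩ := pf' m hne
        have : m 0 = 2*n := by
          have := congrArg (fun f => f (0:Fin 2)) hn; simpa using this
        rw [this] at ho
        exact (Nat.not_odd_iff_even.2 ⟨n, by ring⟩) ho
      rw [hfm, zero_add] at hsum
      exact hsum
  -- g' = 0
  have hg'0 : g' = 0 := by
    ext m
    rw [coeff_zero]
    by_contra hne
    obtain ⟨n, rfl⟩ := pg' m hne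
    have h1 : coeff ((Finsupp.single 0 (2*n)) + Finsupp.single (0:Fin 2) c) (g' * X 0 ^ c) = 0 := by
      apply hterm
      simp
    rw [X_pow_eq_monomial, coeff_mul_monomial] at h1
    rw [mul_one] at h1
    exact hne h1
  -- layer-0 of q vanishes
  have hq0 : ∀ m : Fin 2 →₀ ℕ, m 1 = 0 → coeff m q = 0 := by
    intro m hm
    have h1 : coeff (m + Finsupp.single 1 1) (q * X 1) = coeff m q := coeff_mul_X m 1 q
    rw [hrep', hg'0] at h1
    rw [coeff_add, coeff_add, zero_mul, coeff_zero,
      coeff_X1_pow_mul (by simp [Finsupp.add_apply, hm]), add_zero,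
      add_zero, pe_coeff_zero pf' (by simp [Finsupp.add_apply, hm])] at h1
    exact h1.symm
  -- now decompose q itself
  obtain ⟨f, g, r, hf, hg, hrep⟩ := mem_struct hq
  have pf : Pe f := pe_of_mem hf
  have pg : Pe g := pe_of_mem hg
  have expand2 : ∀ m : Fin 2 →₀ ℕ, m 1 = 0 →
      coeff m f + coeff m (g * X 0 ^ c) = 0 := by
    intro m hm
    have h1 := hq0 m hm
    rw [hrep] at h1
    have hW : g * (X 0 ^ c + X 1 * F) = g * X 0 ^ c + X 1 ^ 1 * (g * F) := by ring
    rw [coeff_add, coeff_add, hW, coeff_add, coeff_X1_pow_mul (by omega),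
      coeff_X1_pow_mul (by omega), add_zero, add_zero] at h1
    exact h1
  have hterm2 : ∀ m : Fin 2 →₀ ℕ, m 1 = 0 → coeff m (g * X 0 ^ c) = 0 := by
    intro m hm
    have hsum := expand2 m hm
    rcases Nat.even_or_odd (m 0) with he | ho
    · by_contra hne
      obtain ⟨n, hn⟩ := pe_mul_pow pg c m hne
      have : m 0 = 2*n + c := by
        have := congrArg (fun f => f (0:Fin 2)) hn; simpa using this
      rw [this] at he
      rcases hc with ⟨c', rfl⟩
      rcases he with ⟨e, he⟩
      omega
    · have hfm : coeff m f = 0 := by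
        by_contra hne
        obtain ⟨n, hn⟩ := pf m hne
        have : m 0 = 2*n := by
          have := congrArg (fun f => f (0:Fin 2)) hn; simpa using this
        rw [this] at ho
        exact (Nat.not_odd_iff_even.2 ⟨n, by ring⟩) ho
      rw [hfm, zero_add] at hsum
      exact hsum
  have hg0 : g = 0 := by
    ext m
    rw [coeff_zero]
    by_contra hne
    obtain ⟨n, rfl⟩ := pg m hne
    have h1 : coeff ((Finsupp.single 0 (2*n)) + Finsupp.single (0:Fin 2) c) (g * X 0 ^ c) = 0 := by
      apply hterm2; simp
    rw [X_pow_eq_monomial, coeff_mul_monomial, mul_one] at h1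
    exact hne h1
  have hf0 : f = 0 := by
    ext m
    rw [coeff_zero]
    by_contra hne
    obtain ⟨n, rfl⟩ := pf m hne
    have hsum := expand2 (Finsupp.single 0 (2*n)) (by simp)
    rw [hg0, zero_mul, coeff_zero, add_zero] at hsum
    exact hne hsum
  exact ⟨r, by rw [hrep, hf0, hg0]; ring⟩

section KKsec
local notation "K" => FractionRing (MvPolynomial (Fin 2) k)

lemma mem_top_mul_span (Φ : MvPolynomial (Fin 2) k →ₐ[k] K) (w : R) (x : K) :
    x ∈ Subalgebra.toSubmodule ((⊤ : Subalgebra k (MvPolynomial (Fin 2) k)).map Φ) *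
      Submodule.span k {Φ w} ↔ ∃ r, x = Φ (w * r) := by
  constructor
  · intro hx
    refine Submodule.mul_induction_on hx ?_ ?_
    · rintro b hb n hn
      obtain ⟨p, -, rfl⟩ := Subalgebra.mem_map.1 hb
      obtain ⟨a, rfl⟩ := Submodule.mem_span_singleton.1 hn
      refine ⟨a • p, ?_⟩
      rw [map_mul, map_smul, mul_smul_comm, mul_smul_comm, mul_comm]
    · rintro x y ⟨r1, rfl⟩ ⟨r2, rfl⟩
      exact ⟨r1 + r2, by rw [mul_add, map_add]⟩
  · rintro ⟨r, rfl⟩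
    have h1 : Φ (w * r) = Φ r * Φ w := by rw [map_mul, mul_comm]
    rw [h1]
    exact Submodule.mul_mem_mul ⟨r, trivial, rfl⟩ (Submodule.subset_span rfl)

lemma conductor_iff (Φ : MvPolynomial (Fin 2) k →ₐ[k] K) (hΦ : Function.Injective Φ)
    {c : ℕ} {F : R} (hc : Odd c) (x : K) :
    (∀ y ∈ (⊤ : Subalgebra k (MvPolynomial (Fin 2) k)).map Φ,
        x * y ∈ (Algebra.adjoin k (Gset k c F)).map Φ) ↔
      x ∈ Subalgebra.toSubmodule ((⊤ : Subalgebra k (MvPolynomial (Fin 2) k)).map Φ) *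
        Submodule.span k {Φ (X 1 ^ 2)} := by
  rw [mem_top_mul_span]
  constructor
  · intro h
    obtain ⟨q, hqA, hq⟩ := Subalgebra.mem_map.1 (by simpa using h 1 ⟨1, trivial, map_one Φ⟩)
    obtain ⟨q1, hq1A, hq1⟩ := Subalgebra.mem_map.1 (h (Φ (X 1)) ⟨X 1, trivial, rfl⟩)
    have hxq : x = Φ q := hq.symm
    have : Φ q1 = Φ (q * X 1) := by rw [map_mul, hq, hq1]
    have hq1A' : q * X 1 ∈ Algebra.adjoin k (Gset k c F) := hΦ this ▸ hq1A
    obtain ⟨r, hr⟩ := hard_dir hc hqA hq1A'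
    exact ⟨r, by rw [hxq, hr]⟩
  · rintro ⟨r, rfl⟩ y hy
    obtain ⟨p, -, rfl⟩ := Subalgebra.mem_map.1 hy
    refine Subalgebra.mem_map.2 ⟨X 1 ^ 2 * (r * p), easy_dir _, ?_⟩
    rw [← map_mul]
    ring_nf

lemma monomial_eq2 (m : Fin 2 →₀ ℕ) (a : k) :
    (monomial m a : R) = C a * (X 0 ^ (m 0) * X 1 ^ (m 1)) := by
  rw [monomial_eq, Finsupp.prod_fintype _ _ (fun i => pow_zero _), Fin.prod_univ_two]

end KKsec

lemma pow_inv_arith {KK : Type} [Field KK] (u v c : KK) (hu : u ≠ 0) (a b N : ℕ)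
    (hle : a + b ≤ N) :
    u ^ N * (c * (u⁻¹ ^ a * (v * u⁻¹) ^ b)) = c * (u ^ (N - (a+b)) * v ^ b) := by
  have h1 : u ^ a * u⁻¹ ^ a = 1 := by rw [← mul_pow, mul_inv_cancel₀ hu, one_pow]
  have h2 : u ^ b * u⁻¹ ^ b = 1 := by rw [← mul_pow, mul_inv_cancel₀ hu, one_pow]
  have hupow : u ^ (N - (a+b)) * (u ^ a * u ^ b) = u ^ N := by
    rw [← pow_add, ← pow_add, Nat.sub_add_cancel hle]
  calc u ^ N * (c * (u⁻¹ ^ a * (v * u⁻¹) ^ b))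
      = (u ^ (N - (a+b)) * (u ^ a * u ^ b)) * (c * (u⁻¹ ^ a * (v ^ b * u⁻¹ ^ b))) := by
        rw [hupow]; ring
    _ = c * (u ^ (N-(a+b)) * v ^ b) * ((u ^ a * u⁻¹ ^ a) * (u ^ b * u⁻¹ ^ b)) := by ring
    _ = c * (u ^ (N-(a+b)) * v ^ b) := by rw [h1, h2]; ring

section FracField

local notation "KK" => FractionRing (MvPolynomial (Fin 2) k)

noncomputable def uu : FractionRing (MvPolynomial (Fin 2) k) :=
  algebraMap (MvPolynomial (Fin 2) k) _ (X 0)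
noncomputable def vv : FractionRing (MvPolynomial (Fin 2) k) :=
  algebraMap (MvPolynomial (Fin 2) k) _ (X 1)

lemma algmap_inj : Function.Injective (algebraMap (MvPolynomial (Fin 2) k) KK) :=
  IsFractionRing.injective (MvPolynomial (Fin 2) k) KK

lemma uu_ne_zero : (uu : KK) ≠ 0 := by
  intro h
  exact MvPolynomial.X_ne_zero 0 (algmap_inj (h.trans (map_zero _).symm))

lemma vv_ne_zero : (vv : KK) ≠ 0 := by
  intro h
  exact MvPolynomial.X_ne_zero 1 (algmap_inj (h.trans (map_zero _).symm))

/-- the chart-1 coordinates -/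
noncomputable def sfam : Fin 2 → KK := ![(uu)⁻¹, vv * (uu)⁻¹]

lemma sum_fin2 (m : Fin 2 →₀ ℕ) : m.sum (fun _ e => e) = m 0 + m 1 := by
  rw [Finsupp.sum_fintype _ _ (fun i => rfl), Fin.sum_univ_two]

lemma psi_mul_pow (p : R) :
    (uu : KK) ^ p.totalDegree * aeval (sfam : Fin 2 → KK) p =
      algebraMap (MvPolynomial (Fin 2) k) KK
        (∑ m ∈ p.support, monomial
          (Finsupp.single 0 (p.totalDegree - (m 0 + m 1)) + Finsupp.single 1 (m 1))
          (coeff m p)) := by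
  set N := p.totalDegree with hN
  conv_lhs => rw [← p.support_sum_monomial_coeff]
  rw [map_sum, map_sum, Finset.mul_sum]
  apply Finset.sum_congr rfl
  intro m hm
  have hle : m 0 + m 1 ≤ N := by
    have := MvPolynomial.le_totalDegree hm
    rw [← hN] at this
    rw [← sum_fin2 m]
    exact this
  rw [aeval_monomial, Finsupp.prod_fintype _ _ (fun i => pow_zero _), Fin.prod_univ_two]
  have hs0 : (sfam : Fin 2 → KK) 0 = (uu)⁻¹ := rfl
  have hs1 : (sfam : Fin 2 → KK) 1 = vv * (uu)⁻¹ := rfl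
  rw [hs0, hs1, monomial_eq2, map_mul, map_mul, map_pow, map_pow]
  have hc : algebraMap (MvPolynomial (Fin 2) k) KK (C (coeff m p)) = algebraMap k KK (coeff m p) := by
    rw [← MvPolynomial.algebraMap_eq, ← IsScalarTower.algebraMap_apply]
  rw [hc]
  have he0 : ((Finsupp.single 0 (N - (m 0 + m 1)) + Finsupp.single 1 (m 1)) : Fin 2 →₀ ℕ) 0
      = N - (m 0 + m 1) := by simp
  have he1 : ((Finsupp.single 0 (N - (m 0 + m 1)) + Finsupp.single 1 (m 1)) : Fin 2 →₀ ℕ) 1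
      = m 1 := by simp
  rw [he0, he1]
  have hXu : algebraMap (MvPolynomial (Fin 2) k) KK (X 0) = uu := rfl
  have hXv : algebraMap (MvPolynomial (Fin 2) k) KK (X 1) = vv := rfl
  rw [hXu, hXv]
  have key := pow_inv_arith (uu : KK) vv (algebraMap k KK (coeff m p)) uu_ne_zero
    (m 0) (m 1) N hle
  linear_combination key

lemma psi_injective : Function.Injective (aeval (sfam : Fin 2 → KK) : R →ₐ[k] KK) := by
  rw [injective_iff_map_eq_zero]
  intro p hp
  by_contra hne
  set N := p.totalDegree with hN
  set q : R := ∑ m ∈ p.support, monomial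
      (Finsupp.single 0 (N - (m 0 + m 1)) + Finsupp.single 1 (m 1)) (coeff m p) with hq
  have hq0 : algebraMap (MvPolynomial (Fin 2) k) KK q = 0 := by
    rw [hq, ← psi_mul_pow p, ← hN]
    have : aeval (sfam : Fin 2 → KK) p = 0 := hp
    rw [this, mul_zero]
  have hqz : q = 0 := algmap_inj
    (by rw [hq0, map_zero] :
      algebraMap (MvPolynomial (Fin 2) k) KK q = algebraMap (MvPolynomial (Fin 2) k) KK 0)
  have hsupp : p.support.Nonempty :=
    Finset.nonempty_iff_ne_empty.2 (fun h => hne (MvPolynomial.support_eq_empty.1 h))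
  obtain ⟨m0, hm0⟩ := hsupp
  have hco : coeff (Finsupp.single 0 (N - (m0 0 + m0 1)) + Finsupp.single 1 (m0 1)) q
      = coeff m0 p := by
    rw [hq, MvPolynomial.coeff_sum]
    rw [Finset.sum_eq_single_of_mem m0 hm0]
    · rw [coeff_monomial, if_pos rfl]
    · intro b hb hbne
      rw [coeff_monomial, if_neg]
      intro heq
      apply hbne
      have hleb : b 0 + b 1 ≤ N := by
        rw [← sum_fin2 b]; exact MvPolynomial.le_totalDegree hb
      have hlem : m0 0 + m0 1 ≤ N := by
        rw [← sum_fin2 m0]; exact MvPolynomial.le_totalDegree hm0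
      have h1 : b 1 = m0 1 := by
        have := congrArg (fun f => f (1 : Fin 2)) heq
        simpa using this
      have h0 : N - (b 0 + b 1) = N - (m0 0 + m0 1) := by
        have := congrArg (fun f => f (0 : Fin 2)) heq
        simpa using this
      have h0' : b 0 = m0 0 := by omega
      ext i
      fin_cases i
      · exact h0'
      · exact h1
  rw [hqz, coeff_zero] at hco
  exact MvPolynomial.mem_support_iff.1 hm0 hco.symm

end FracField

section Assemble
local notation "KK" => FractionRing (MvPolynomial (Fin 2) k)

noncomputable def Phi0 : MvPolynomial (Fin 2) k →ₐ[k] FractionRing (MvPolynomial (Fin 2) k) :=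
  IsScalarTower.toAlgHom k _ _

lemma phi0_inj : Function.Injective (Phi0 : MvPolynomial (Fin 2) k →ₐ[k] KK) := algmap_inj

lemma rangeX : (Set.range (X : Fin 2 → R)) = {X 0, X 1} := by
  ext w
  constructor
  · rintro ⟨i, rfl⟩
    fin_cases i
    · left; rfl
    · right; rfl
  · rintro (rfl | rfl)
    · exact ⟨0, rfl⟩
    · exact ⟨1, rfl⟩

lemma hB0 : Algebra.adjoin k ({uu, vv} : Set KK) =
    (⊤ : Subalgebra k (MvPolynomial (Fin 2) k)).map (Phi0 : R →ₐ[k] KK) := by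
  rw [← MvPolynomial.adjoin_range_X, AlgHom.map_adjoin, rangeX, Set.image_insert_eq,
    Set.image_singleton]
  rfl

lemma hB1 : Algebra.adjoin k ({(uu : KK)⁻¹, vv * uu⁻¹} : Set KK) =
    (⊤ : Subalgebra k (MvPolynomial (Fin 2) k)).map (aeval (sfam : Fin 2 → KK) : R →ₐ[k] KK) := by
  rw [← MvPolynomial.adjoin_range_X, AlgHom.map_adjoin, rangeX, Set.image_insert_eq,
    Set.image_singleton, aeval_X, aeval_X]
  rfl

noncomputable def P0 (α₀ α₁ α₂ α₃ : k) : MvPolynomial (Fin 2) k :=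
  C α₃ * X 0 ^ 3 + C α₂ * X 0 ^ 2 + C α₁ * X 0 + C α₀

noncomputable def Q0 (α₀ α₁ α₂ α₃ : k) : MvPolynomial (Fin 2) k :=
  C α₃ + C α₂ * X 0 + C α₁ * X 0 ^ 2 + C α₀ * X 0 ^ 3

lemma Phi0_X0 : (Phi0 : R →ₐ[k] KK) (X 0) = uu := rfl
lemma Phi0_X1 : (Phi0 : R →ₐ[k] KK) (X 1) = vv := rfl
lemma Phi0_C (a : k) : (Phi0 : R →ₐ[k] KK) (C a) = algebraMap k KK a := by
  rw [← MvPolynomial.algebraMap_eq, AlgHom.commutes]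

lemma Psi_X0 : (aeval (sfam : Fin 2 → KK) : R →ₐ[k] KK) (X 0) = (uu)⁻¹ := by
  rw [aeval_X]; rfl
lemma Psi_X1 : (aeval (sfam : Fin 2 → KK) : R →ₐ[k] KK) (X 1) = vv * (uu)⁻¹ := by
  rw [aeval_X]; rfl
lemma Psi_C (a : k) : (aeval (sfam : Fin 2 → KK) : R →ₐ[k] KK) (C a) = algebraMap k KK a := by
  rw [← MvPolynomial.algebraMap_eq, AlgHom.commutes]

variable (α₀ α₁ α₂ α₃ : k)

lemma hA0 : Algebra.adjoin k
    ({uu ^ 2, uu ^ 3 + vv * (algebraMap k KK α₃ * uu ^ 3 + algebraMap k KK α₂ * uu ^ 2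
        + algebraMap k KK α₁ * uu + algebraMap k KK α₀),
      vv ^ 2, vv ^ 2 * uu, vv ^ 3, vv ^ 3 * uu} : Set KK) =
    (Algebra.adjoin k (Gset k 3 (P0 α₀ α₁ α₂ α₃))).map (Phi0 : R →ₐ[k] KK) := by
  rw [AlgHom.map_adjoin]
  congr 1
  rw [Gset, Set.image_insert_eq, Set.image_insert_eq, Set.image_insert_eq, Set.image_insert_eq,
    Set.image_insert_eq, Set.image_singleton]
  simp only [map_add, map_mul, map_pow, P0, Phi0_X0, Phi0_X1, Phi0_C]

lemma hA1 : Algebra.adjoin k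
    ({(uu:KK)⁻¹ ^ 2, (uu:KK)⁻¹ + vv * (uu:KK)⁻¹ ^ 4 * (algebraMap k KK α₃ * uu ^ 3
        + algebraMap k KK α₂ * uu ^ 2 + algebraMap k KK α₁ * uu + algebraMap k KK α₀),
      vv ^ 2 * (uu:KK)⁻¹ ^ 2, vv ^ 2 * (uu:KK)⁻¹ ^ 3, vv ^ 3 * (uu:KK)⁻¹ ^ 3,
      vv ^ 3 * (uu:KK)⁻¹ ^ 4} : Set KK) =
    (Algebra.adjoin k (Gset k 1 (Q0 α₀ α₁ α₂ α₃))).map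
      (aeval (sfam : Fin 2 → KK) : R →ₐ[k] KK) := by
  rw [AlgHom.map_adjoin]
  congr 1
  rw [Gset, Set.image_insert_eq, Set.image_insert_eq, Set.image_insert_eq, Set.image_insert_eq,
    Set.image_insert_eq, Set.image_singleton]
  simp only [map_add, map_mul, map_pow, Q0, Psi_X0, Psi_X1, Psi_C, pow_one]
  have e2 : (uu:KK)⁻¹ + vv * (uu:KK)⁻¹ ^ 4 * (algebraMap k KK α₃ * uu ^ 3
        + algebraMap k KK α₂ * uu ^ 2 + algebraMap k KK α₁ * uu + algebraMap k KK α₀)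
      = (uu:KK)⁻¹ + vv * (uu:KK)⁻¹ * (algebraMap k KK α₃ + algebraMap k KK α₂ * (uu:KK)⁻¹
        + algebraMap k KK α₁ * (uu:KK)⁻¹ ^ 2 + algebraMap k KK α₀ * (uu:KK)⁻¹ ^ 3) := by
    have hcan : (uu:KK)⁻¹ * uu = 1 := inv_mul_cancel₀ (uu_ne_zero (k := k))
    have h3 : (uu:KK)⁻¹ ^ 4 * uu ^ 3 = uu⁻¹ := by
      calc (uu:KK)⁻¹ ^ 4 * uu ^ 3 = uu⁻¹ * (uu⁻¹ * uu) ^ 3 := by ring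
        _ = uu⁻¹ := by rw [hcan, one_pow, mul_one]
    have h2 : (uu:KK)⁻¹ ^ 4 * uu ^ 2 = uu⁻¹ ^ 2 := by
      calc (uu:KK)⁻¹ ^ 4 * uu ^ 2 = uu⁻¹ ^ 2 * (uu⁻¹ * uu) ^ 2 := by ring
        _ = uu⁻¹ ^ 2 := by rw [hcan, one_pow, mul_one]
    have h1 : (uu:KK)⁻¹ ^ 4 * uu = uu⁻¹ ^ 3 := by
      calc (uu:KK)⁻¹ ^ 4 * uu = uu⁻¹ ^ 3 * (uu⁻¹ * uu) := by ring
        _ = uu⁻¹ ^ 3 := by rw [hcan, mul_one]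
    linear_combination (vv * algebraMap k KK α₃) * h3 + (vv * algebraMap k KK α₂) * h2
      + (vv * algebraMap k KK α₁) * h1
  have e3 : (vv : KK) ^ 2 * (uu:KK)⁻¹ ^ 2 = (vv * uu⁻¹) ^ 2 := by ring
  have e4 : (vv : KK) ^ 2 * (uu:KK)⁻¹ ^ 3 = (vv * uu⁻¹) ^ 2 * uu⁻¹ := by ring
  have e5 : (vv : KK) ^ 3 * (uu:KK)⁻¹ ^ 3 = (vv * uu⁻¹) ^ 3 := by ring
  have e6 : (vv : KK) ^ 3 * (uu:KK)⁻¹ ^ 4 = (vv * uu⁻¹) ^ 3 * uu⁻¹ := by ring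
  rw [e2, e3, e4, e5, e6]

end Assemble

open MvPolynomial in
/-- The conductor of the normalization `ν : X = P² → Y` is the ideal `O_X(-B) = O_X(-2)` of
the double line: on the three standard charts of `X` inside `K = k(u,v)` it is generated by
`v²`, `(vu⁻¹)²`, and `1` respectively.  Consequently, using `ω_X = O_X(-3)` and
`ω_X = 𝔠 ⊗ ν^*ω_Y`, the pullback `ν^*(ω_Y)`, trivialized on the charts by `v⁻²`, `u⁻¹v⁻²`,
`v⁻³`, is isomorphic to `O_X(-1)` (trivialized by `v`, `vu⁻¹`, `1`); in particular
`deg ω_Y = -1` and `ω_Y^∨` is ample, so `Y` is a del Pezzo surface. -/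
theorem stmt18 (k : Type) [Field k] [CharP k 2] (α₀ α₁ α₂ α₃ : k) (hα₀ : α₀ ≠ 0) :
    letI K := FractionRing (MvPolynomial (Fin 2) k)
    letI u : K := algebraMap (MvPolynomial (Fin 2) k) K (X 0)
    letI v : K := algebraMap (MvPolynomial (Fin 2) k) K (X 1)
    letI P : K := algebraMap k K α₃ * u ^ 3 + algebraMap k K α₂ * u ^ 2
      + algebraMap k K α₁ * u + algebraMap k K α₀
    -- charts of Y
    letI A0 := Algebra.adjoin k
      ({u ^ 2, u ^ 3 + v * P, v ^ 2, v ^ 2 * u, v ^ 3, v ^ 3 * u} : Set K)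
    letI A1 := Algebra.adjoin k ({u⁻¹ ^ 2, u⁻¹ + v * u⁻¹ ^ 4 * P, v ^ 2 * u⁻¹ ^ 2,
      v ^ 2 * u⁻¹ ^ 3, v ^ 3 * u⁻¹ ^ 3, v ^ 3 * u⁻¹ ^ 4} : Set K)
    letI A2 := Algebra.adjoin k ({u * v⁻¹, v⁻¹} : Set K)
    -- charts of the normalization X = P²
    letI B0 := Algebra.adjoin k ({u, v} : Set K)
    letI B1 := Algebra.adjoin k ({u⁻¹, v * u⁻¹} : Set K)
    letI B2 := Algebra.adjoin k ({u * v⁻¹, v⁻¹} : Set K)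
    -- the conductor is O_X(-B) = O_X(-2), generated chartwise by v², (vu⁻¹)², 1 :
    (∀ x : K, (∀ y ∈ B0, x * y ∈ A0) ↔
      x ∈ Subalgebra.toSubmodule B0 * Submodule.span k {v ^ 2}) ∧
    (∀ x : K, (∀ y ∈ B1, x * y ∈ A1) ↔
      x ∈ Subalgebra.toSubmodule B1 * Submodule.span k {(v * u⁻¹) ^ 2}) ∧
    (∀ x : K, (∀ y ∈ B2, x * y ∈ A2) ↔ x ∈ B2) ∧
    -- ν^*(ω_Y) = ω_X ⊗ 𝔠^{-1} is isomorphic to O_X(-1):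
    (∃ h : K, h ≠ 0 ∧
      Subalgebra.toSubmodule B0 * Submodule.span k {v⁻¹ ^ 2}
        = Subalgebra.toSubmodule B0 * Submodule.span k {h * v} ∧
      Subalgebra.toSubmodule B1 * Submodule.span k {u⁻¹ * v⁻¹ ^ 2}
        = Subalgebra.toSubmodule B1 * Submodule.span k {h * (v * u⁻¹)} ∧
      Subalgebra.toSubmodule B2 * Submodule.span k {v⁻¹ ^ 3}
        = Subalgebra.toSubmodule B2 * Submodule.span k {h}) := by
  rw [show algebraMap (MvPolynomial (Fin 2) k) (FractionRing (MvPolynomial (Fin 2) k)) (X 0)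
      = uu from rfl,
    show algebraMap (MvPolynomial (Fin 2) k) (FractionRing (MvPolynomial (Fin 2) k)) (X 1)
      = vv from rfl]
  refine ⟨?_, ?_, ?_, ?_⟩
  · -- chart 0
    intro x
    rw [hB0, hA0 α₀ α₁ α₂ α₃,
      show (vv : FractionRing (MvPolynomial (Fin 2) k)) ^ 2
        = (Phi0 : MvPolynomial (Fin 2) k →ₐ[k] FractionRing (MvPolynomial (Fin 2) k)) (X 1 ^ 2)
        from by rw [map_pow, Phi0_X1]]
    exact conductor_iff Phi0 phi0_inj ⟨1, rfl⟩ x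
  · -- chart 1
    intro x
    rw [hB1, hA1 α₀ α₁ α₂ α₃,
      show ((vv : FractionRing (MvPolynomial (Fin 2) k)) * uu⁻¹) ^ 2
        = (aeval (sfam : Fin 2 → FractionRing (MvPolynomial (Fin 2) k)) :
            MvPolynomial (Fin 2) k →ₐ[k] FractionRing (MvPolynomial (Fin 2) k)) (X 1 ^ 2)
        from by rw [map_pow, Psi_X1]]
    exact conductor_iff _ psi_injective ⟨0, rfl⟩ x
  · -- chart 2
    intro x
    constructor
    · intro hx
      have := hx 1 (one_mem _)
      rwa [mul_one] at this
    · intro hx y hy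
      exact mul_mem hx hy
  · -- the sheaf ν^* ω_Y ≅ O(-1)
    have hvcan : (vv : FractionRing (MvPolynomial (Fin 2) k))⁻¹ * vv = 1 :=
      inv_mul_cancel₀ (vv_ne_zero (k := k))
    refine ⟨(vv : FractionRing (MvPolynomial (Fin 2) k))⁻¹ ^ 3,
      pow_ne_zero 3 (inv_ne_zero (vv_ne_zero (k := k))), ?_, ?_, rfl⟩
    · rw [show (vv : FractionRing (MvPolynomial (Fin 2) k))⁻¹ ^ 3 * vv = vv⁻¹ ^ 2 from by
        calc (vv : FractionRing (MvPolynomial (Fin 2) k))⁻¹ ^ 3 * vv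
            = vv⁻¹ ^ 2 * (vv⁻¹ * vv) := by ring
          _ = vv⁻¹ ^ 2 := by rw [hvcan, mul_one]]
    · rw [show (vv : FractionRing (MvPolynomial (Fin 2) k))⁻¹ ^ 3 * (vv * uu⁻¹)
          = uu⁻¹ * vv⁻¹ ^ 2 from by
        calc (vv : FractionRing (MvPolynomial (Fin 2) k))⁻¹ ^ 3 * (vv * uu⁻¹)
            = uu⁻¹ * vv⁻¹ ^ 2 * (vv⁻¹ * vv) := by ring
          _ = uu⁻¹ * vv⁻¹ ^ 2 := by rw [hvcan, mul_one]]
end
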